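/- arXiv:2212.06127 — 9 statements merged into one kernel-verified Lean document; each statement's English description precedes it below -/
import Mathlib

section
/- The series ∑_{n > x} 1/(φ(n)·n) is O(1/x); that is, there exists a constant C > 0 such that for all real x > 0, ∑_{n : ℕ, n > x} 1/(φ(n)·n) ≤ C/x. -/
open scoped ENNReal
open Nat ArithmeticFunction Finset

section SumTotientTail


lemma totient_sq_lb : ∀ n : ℕ, (n % 2 = 1 → n ≤ n.totient ^ 2) ∧ n ≤ 2 * n.totient ^ 2 := by
  intro n
  induction n using Nat.recOnPosPrimePosCoprime with
  | prime_pow p k hp hk =>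
      have hp2 : 2 ≤ p := hp.two_le
      have hφ : (p ^ k).totient = p ^ (k - 1) * (p - 1) := Nat.totient_prime_pow hp hk
      have hsq : (p ^ k).totient ^ 2 = p ^ (2 * (k - 1)) * (p - 1) ^ 2 := by
        rw [hφ, mul_pow, ← pow_mul, mul_comm (k-1) 2]
      have hodd_case : 3 ≤ p → p ^ k ≤ (p ^ k).totient ^ 2 := by
        intro hp3
        rw [hsq]
        rcases Nat.eq_or_lt_of_le hk with h1 | h2
        · obtain rfl : k = 1 := h1.symm
          simp only [pow_one, Nat.sub_self, mul_zero, pow_zero, one_mul]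
          obtain ⟨q, rfl⟩ : ∃ q, p = q + 1 := ⟨p - 1, by omega⟩
          simp only [Nat.add_sub_cancel]
          nlinarith [hp3]
        · have h1 : 1 ≤ (p - 1) ^ 2 := Nat.one_le_pow _ _ (by omega)
          calc p ^ k ≤ p ^ (2 * (k - 1)) := Nat.pow_le_pow_right (by omega) (by omega)
            _ ≤ p ^ (2 * (k - 1)) * (p - 1) ^ 2 := Nat.le_mul_of_pos_right _ (by omega)
      constructor
      · intro hodd
        refine hodd_case ?_
        rcases Nat.mod_two_eq_zero_or_one p with h | h
        · have : 2 ∣ p ^ k := dvd_pow (Nat.dvd_of_mod_eq_zero h) hk.ne'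
          omega
        · omega
      · rcases Nat.lt_or_ge p 3 with h | h
        · obtain rfl : p = 2 := by omega
          rw [hsq]
          calc (2:ℕ) ^ k ≤ 2 ^ (2*(k-1)+1) := Nat.pow_le_pow_right (by omega) (by omega)
            _ = 2 * 2 ^ (2 * (k - 1)) := by ring
            _ ≤ 2 * (2 ^ (2 * (k - 1)) * (2 - 1) ^ 2) := by norm_num
        · exact le_trans (hodd_case h) (by omega)
  | zero => simp
  | one => simp
  | coprime a b ha hb hab iha ihb =>
      have hφ : (a * b).totient = a.totient * b.totient := Nat.totient_mul hab
      have hne : ¬ (2 ∣ a ∧ 2 ∣ b) := by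
        rintro ⟨h1, h2⟩
        have : 2 ∣ Nat.gcd a b := Nat.dvd_gcd h1 h2
        rw [Nat.Coprime] at hab
        omega
      constructor
      · intro hodd
        have hd : ¬ (2 ∣ a * b) := by omega
        have ha2 : a % 2 = 1 := by
          rcases Nat.mod_two_eq_zero_or_one a with h | h
          · exact absurd ((Nat.dvd_of_mod_eq_zero h).mul_right b) hd
          · exact h
        have hb2 : b % 2 = 1 := by
          rcases Nat.mod_two_eq_zero_or_one b with h | h
          · exact absurd ((Nat.dvd_of_mod_eq_zero h).mul_left a) hd
          · exact h
        calc a * b ≤ a.totient ^ 2 * b.totient ^ 2 :=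
              Nat.mul_le_mul (iha.1 ha2) (ihb.1 hb2)
          _ = (a * b).totient ^ 2 := by rw [hφ, mul_pow]
      · rcases Nat.mod_two_eq_zero_or_one a with h | h
        · have hb2 : b % 2 = 1 := by
            rcases Nat.mod_two_eq_zero_or_one b with h' | h'
            · exact absurd ⟨Nat.dvd_of_mod_eq_zero h, Nat.dvd_of_mod_eq_zero h'⟩ hne
            · exact h'
          calc a * b ≤ (2 * a.totient ^ 2) * b.totient ^ 2 :=
                Nat.mul_le_mul iha.2 (ihb.1 hb2)
            _ = 2 * (a * b).totient ^ 2 := by rw [hφ, mul_pow]; ring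
        · calc a * b ≤ a.totient ^ 2 * (2 * b.totient ^ 2) :=
                Nat.mul_le_mul (iha.1 h) ihb.2
            _ = 2 * (a * b).totient ^ 2 := by rw [hφ, mul_pow]; ring


noncomputable def sqfInvPhi : ArithmeticFunction ℝ :=
  ⟨fun d => if Squarefree d then ((d.totient : ℝ))⁻¹ else 0, by
    simp [not_squarefree_zero]⟩

lemma sqfInvPhi_apply (d : ℕ) :
    sqfInvPhi d = if Squarefree d then ((d.totient : ℝ))⁻¹ else 0 := rfl

lemma sqfInvPhi_mult : sqfInvPhi.IsMultiplicative := by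
  rw [ArithmeticFunction.IsMultiplicative.iff_ne_zero]
  constructor
  · simp [sqfInvPhi_apply, squarefree_one]
  · intro m n hm hn hmn
    simp only [sqfInvPhi_apply, Nat.squarefree_mul hmn, Nat.totient_mul hmn]
    by_cases h1 : Squarefree m <;> by_cases h2 : Squarefree n <;>
      simp [h1, h2, Nat.cast_mul, mul_inv, mul_comm]

noncomputable def selfDivPhi : ArithmeticFunction ℝ :=
  ⟨fun n => (n : ℝ) / (n.totient : ℝ), by simp⟩

lemma selfDivPhi_apply (n : ℕ) : selfDivPhi n = (n : ℝ) / (n.totient : ℝ) := rfl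

lemma selfDivPhi_mult : selfDivPhi.IsMultiplicative := by
  rw [ArithmeticFunction.IsMultiplicative.iff_ne_zero]
  constructor
  · simp [selfDivPhi_apply]
  · intro m n hm hn hmn
    simp only [selfDivPhi_apply, Nat.totient_mul hmn]
    push_cast
    rw [mul_div_mul_comm]

lemma sum_sqfInvPhi_divisors (n : ℕ) :
    ∑ d ∈ n.divisors, sqfInvPhi d = (n : ℝ) / (n.totient : ℝ) := by
  have key : (↑(ArithmeticFunction.zeta : ArithmeticFunction ℕ) : ArithmeticFunction ℝ) * sqfInvPhi = selfDivPhi := by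
    rw [ArithmeticFunction.IsMultiplicative.eq_iff_eq_on_prime_powers _
      (ArithmeticFunction.isMultiplicative_zeta.natCast.mul sqfInvPhi_mult) _ selfDivPhi_mult]
    intro p i hp
    rw [ArithmeticFunction.coe_zeta_mul_apply, Nat.sum_divisors_prime_pow hp]
    have hp2 : 2 ≤ p := hp.two_le
    have hφp : (p.totient : ℝ) = (p : ℝ) - 1 := by
      rw [Nat.totient_prime hp]; push_cast [hp.one_le]; ring
    have hsum : ∀ j : ℕ, ∑ k ∈ Finset.range (j + 1), sqfInvPhi (p ^ k) =
        if j = 0 then 1 else 1 + ((p : ℝ) - 1)⁻¹ := by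
      intro j
      induction j with
      | zero => simp [sqfInvPhi_apply, squarefree_one]
      | succ j ih =>
          rw [Finset.sum_range_succ, ih]
          rcases Nat.eq_zero_or_pos j with rfl | hj
          · simp [sqfInvPhi_apply, pow_one, hp.squarefree, hφp]
          · have hns : ¬ Squarefree (p ^ (j + 1)) := by
              intro hs
              have hu := hs p (by
                calc p * p = p ^ 2 := (sq p).symm
                  _ ∣ p ^ (j + 1) := pow_dvd_pow p (by omega))
              exact hp.one_lt.ne' (Nat.isUnit_iff.mp hu)
            simp [sqfInvPhi_apply, hns, hj.ne']
    rw [hsum i, selfDivPhi_apply]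
    rcases Nat.eq_zero_or_pos i with rfl | hi
    · simp
    · rw [Nat.totient_prime_pow hp hi, if_neg hi.ne']
      have h1 : ((p:ℝ) - 1) ≠ 0 := by
        have : (2:ℝ) ≤ (p:ℝ) := by exact_mod_cast hp2
        linarith
      have h2 : (p:ℝ) ≠ 0 := by positivity
      push_cast [Nat.cast_sub hp.one_le]
      have hpow : (p:ℝ) ^ (i - 1) * (p:ℝ) = (p:ℝ) ^ i := by
        rw [← pow_succ]
        congr 1
        omega
      field_simp
      nlinarith [hpow]
  rw [← ArithmeticFunction.coe_zeta_mul_apply, key, selfDivPhi_apply]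


lemma tail_sq_summable (N : ℕ) :
    Summable (fun m : ℕ => if N ≤ m then (1:ℝ)/(m:ℝ)^2 else 0) := by
  apply Summable.of_nonneg_of_le (fun m => by positivity)
    (fun m => ?_) (Real.summable_one_div_nat_pow.mpr (by norm_num : 1 < 2))
  by_cases h : N ≤ m <;> simp [h] <;> positivity

lemma tail_sq_real (N : ℕ) (hN : 1 ≤ N) :
    ∑' m : ℕ, (if N ≤ m then (1:ℝ)/(m:ℝ)^2 else 0) ≤ 2/N := by
  apply Real.tsum_le_of_sum_range_le (fun m => by positivity)
  intro K
  have key : ∀ K : ℕ, ∑ m ∈ Finset.range K, (if N ≤ m then (1:ℝ)/(m:ℝ)^2 else 0)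
      ≤ 2/(N:ℝ) - 2/(max K N : ℕ) := by
    intro K
    induction K with
    | zero => simp
    | succ K ih =>
        rw [Finset.sum_range_succ]
        by_cases h : N ≤ K
        · rw [if_pos h]
          have hK1 : 1 ≤ K := le_trans hN h
          have hmax : max K N = K := max_eq_left h
          have hmax' : max (K+1) N = K + 1 := max_eq_left (by omega)
          rw [hmax] at ih
          rw [hmax']
          have hKpos : (0:ℝ) < K := by exact_mod_cast hK1
          have step : (1:ℝ)/(K:ℝ)^2 ≤ 2/(K:ℝ) - 2/((K:ℝ)+1) := by
            rw [div_sub_div _ _ (ne_of_gt hKpos) (by positivity)]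
            rw [div_le_div_iff₀ (by positivity) (by positivity)]
            have hK1' : (1:ℝ) ≤ (K:ℝ) := by exact_mod_cast hK1
            ring_nf
            nlinarith [hK1']
          push_cast
          linarith [ih, step]
        · rw [if_neg h]
          have hmax : max K N = N := max_eq_right (by omega)
          have hmax' : max (K+1) N = N := max_eq_right (by omega)
          rw [hmax] at ih
          rw [hmax']
          linarith [ih]
  have := key K
  have hNpos : (0:ℝ) < (N:ℝ) := by exact_mod_cast hN
  have hmaxpos : (0:ℝ) < ((max K N : ℕ):ℝ) := by
    have : 1 ≤ max K N := le_trans hN (le_max_right _ _)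
    exact_mod_cast this
  have : (0:ℝ) ≤ 2/((max K N : ℕ):ℝ) := by positivity
  linarith [key K]

lemma tail_sq_ennreal (y : ℝ) (hy : 0 < y) :
    ∑' m : ℕ, (if y < (m:ℝ) then (((m:ℝ≥0∞))^2)⁻¹ else 0) ≤ ENNReal.ofReal (2/y) := by
  set N := Nat.floor y + 1 with hNdef
  have hN1 : 1 ≤ N := by omega
  have hcond : ∀ m : ℕ, (y < (m:ℝ)) ↔ N ≤ m := by
    intro m
    rw [hNdef]
    constructor
    · intro h
      have := (Nat.floor_lt hy.le).mpr h
      omega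
    · intro h
      have : Nat.floor y < m := by omega
      exact (Nat.floor_lt hy.le).mp this
  have hterm : ∀ m : ℕ, (if y < (m:ℝ) then (((m:ℝ≥0∞))^2)⁻¹ else 0)
      = ENNReal.ofReal (if N ≤ m then (1:ℝ)/(m:ℝ)^2 else 0) := by
    intro m
    simp only [hcond m]
    by_cases h : N ≤ m
    · rw [if_pos h, if_pos h]
      have hm1 : 1 ≤ m := le_trans hN1 h
      have hmpos : (0:ℝ) < (m:ℝ)^2 := by positivity
      rw [one_div, ENNReal.ofReal_inv_of_pos hmpos]
      congr 1
      rw [ENNReal.ofReal_pow (by positivity), ENNReal.ofReal_natCast]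
    · rw [if_neg h, if_neg h, ENNReal.ofReal_zero]
  calc ∑' m : ℕ, (if y < (m:ℝ) then (((m:ℝ≥0∞))^2)⁻¹ else 0)
      = ∑' m : ℕ, ENNReal.ofReal (if N ≤ m then (1:ℝ)/(m:ℝ)^2 else 0) := by
        exact tsum_congr hterm
    _ = ENNReal.ofReal (∑' m : ℕ, (if N ≤ m then (1:ℝ)/(m:ℝ)^2 else 0)) :=
        (ENNReal.ofReal_tsum_of_nonneg (fun m => by positivity) (tail_sq_summable N)).symm
    _ ≤ ENNReal.ofReal (2/(N:ℝ)) := ENNReal.ofReal_le_ofReal (tail_sq_real N hN1)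
    _ ≤ ENNReal.ofReal (2/y) := by
        apply ENNReal.ofReal_le_ofReal
        apply div_le_div_of_nonneg_left (by norm_num) hy
        rw [hNdef]
        push_cast
        linarith [Nat.lt_floor_add_one y]


-- copy of defs from t2 assumed; test wf parts standalone

noncomputable def wf : ℕ → ℝ≥0∞ :=
  fun d => if Squarefree d then ((d.totient : ℕ) : ℝ≥0∞)⁻¹ else 0

lemma ofReal_sqfInvPhi (d : ℕ) : ENNReal.ofReal (sqfInvPhi d) = wf d := by
  show ENNReal.ofReal (if Squarefree d then ((d.totient : ℝ))⁻¹ else 0) = wf d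
  rw [wf]
  by_cases h : Squarefree d
  · rw [if_pos h, if_pos h]
    have hd : d ≠ 0 := h.ne_zero
    have hφ : 0 < d.totient := Nat.totient_pos.mpr (Nat.pos_of_ne_zero hd)
    have hφR : (0:ℝ) < (d.totient : ℝ) := by exact_mod_cast hφ
    rw [ENNReal.ofReal_inv_of_pos hφR, ENNReal.ofReal_natCast]
  · rw [if_neg h, if_neg h, ENNReal.ofReal_zero]


lemma pointwise_ofReal (n : ℕ) (hn : 0 < n) :
    ENNReal.ofReal (1/((n.totient:ℝ) * (n:ℝ)))
      = ∑ d ∈ n.divisors, wf d * (((n:ℝ≥0∞))^2)⁻¹ := by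
  have hφ : (0:ℝ) < (n.totient : ℝ) := by
    exact_mod_cast Nat.totient_pos.mpr hn
  have hnR : (0:ℝ) < (n:ℝ) := by exact_mod_cast hn
  have hid : (1:ℝ)/((n.totient:ℝ) * (n:ℝ))
      = (∑ d ∈ n.divisors, sqfInvPhi d) * (((n:ℝ))^2)⁻¹ := by
    rw [sum_sqfInvPhi_divisors n]
    field_simp
  rw [hid, ENNReal.ofReal_mul' (by positivity)]
  rw [ENNReal.ofReal_sum_of_nonneg (fun d _ => by
    show (0:ℝ) ≤ sqfInvPhi d
    show (0:ℝ) ≤ if Squarefree d then ((d.totient : ℝ))⁻¹ else 0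
    positivity)]
  rw [Finset.sum_mul]
  apply Finset.sum_congr rfl
  intro d _
  rw [ofReal_sqfInvPhi]
  congr 1
  rw [ENNReal.ofReal_inv_of_pos (by positivity), ENNReal.ofReal_pow hnR.le,
    ENNReal.ofReal_natCast]





noncomputable def Bval : ℝ≥0∞ := ∑' d : ℕ, wf d * ((d : ℝ≥0∞))⁻¹

lemma main_ennreal (x : ℝ) (hx : 0 < x) :
    ∑' n : ℕ, (if x < (n:ℝ) then ENNReal.ofReal (1/((n.totient:ℝ) * (n:ℝ))) else 0)
      ≤ Bval * ENNReal.ofReal (2/x) := by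
  -- the pair-sum majorant
  set H : ℕ × ℕ → ℝ≥0∞ := fun p =>
    if x < ((p.1 * p.2 : ℕ) : ℝ) then wf p.1 * ((((p.1 * p.2 : ℕ)) : ℝ≥0∞)^2)⁻¹ else 0 with hH
  have step1 : ∑' n : ℕ, (if x < (n:ℝ) then ENNReal.ofReal (1/((n.totient:ℝ) * (n:ℝ))) else 0)
      = ∑' n : ℕ, ∑ d ∈ n.divisors, (if x < (n:ℝ) then wf d * (((n:ℝ≥0∞))^2)⁻¹ else 0) := by
    apply tsum_congr
    intro n
    by_cases h : x < (n:ℝ)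
    · have hn : 0 < n := by
        by_contra hn
        push_neg at hn
        interval_cases n
        simp at h; linarith
      rw [if_pos h, pointwise_ofReal n hn]
      apply Finset.sum_congr rfl
      intro d _
      rw [if_pos h]
    · rw [if_neg h]
      symm
      apply Finset.sum_eq_zero
      intro d _
      rw [if_neg h]
  have step2 : ∑' n : ℕ, ∑ d ∈ n.divisors, (if x < (n:ℝ) then wf d * (((n:ℝ≥0∞))^2)⁻¹ else 0)
      ≤ ∑' p : ℕ × ℕ, H p := by
    have eq1 : ∀ n : ℕ, ∑ d ∈ n.divisors, (if x < (n:ℝ) then wf d * (((n:ℝ≥0∞))^2)⁻¹ else 0)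
        = ∑' d : ↥n.divisors, (if x < (n:ℝ) then wf d.1 * (((n:ℝ≥0∞))^2)⁻¹ else 0) :=
      fun n => (Finset.tsum_subtype n.divisors _).symm
    calc ∑' n : ℕ, ∑ d ∈ n.divisors, (if x < (n:ℝ) then wf d * (((n:ℝ≥0∞))^2)⁻¹ else 0)
        = ∑' n : ℕ, ∑' d : ↥n.divisors, (if x < (n:ℝ) then wf d.1 * (((n:ℝ≥0∞))^2)⁻¹ else 0) :=
          tsum_congr eq1
      _ = ∑' sg : (Σ n : ℕ, ↥n.divisors),
            (if x < ((sg.1:ℕ):ℝ) then wf sg.2.1 * ((((sg.1:ℕ)):ℝ≥0∞)^2)⁻¹ else 0) :=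
          (ENNReal.tsum_sigma _).symm
      _ = ∑' sg : (Σ n : ℕ, ↥n.divisors), H (sg.2.1, sg.1 / sg.2.1) := by
          apply tsum_congr
          rintro ⟨n, d, hd⟩
          rw [Nat.mem_divisors] at hd
          have hdn : d * (n / d) = n := Nat.mul_div_cancel' hd.1
          simp only [hH, hdn]
      _ ≤ ∑' p : ℕ × ℕ, H p := by
          apply ENNReal.tsum_comp_le_tsum_of_injective
          rintro ⟨n₁, d₁, hd₁⟩ ⟨n₂, d₂, hd₂⟩ hEq
          simp only [Prod.mk.injEq] at hEq
          obtain ⟨h1, h2⟩ := hEq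
          subst h1
          have hm₁ : d₁ ∣ n₁ := (Nat.mem_divisors.mp hd₁).1
          have hm₂ : d₁ ∣ n₂ := (Nat.mem_divisors.mp hd₂).1
          have hn : n₁ = n₂ := by
            rw [← Nat.mul_div_cancel' hm₁, h2, Nat.mul_div_cancel' hm₂]
          subst hn
          rfl
  have step3 : ∑' p : ℕ × ℕ, H p ≤ ∑' d : ℕ, (wf d * ((d:ℝ≥0∞))⁻¹) * ENNReal.ofReal (2/x) := by
    rw [ENNReal.tsum_prod']
    apply ENNReal.tsum_le_tsum
    intro d
    by_cases hsf : Squarefree d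
    · have hd1 : 1 ≤ d := Nat.pos_of_ne_zero hsf.ne_zero
      have hdR : (0:ℝ) < (d:ℝ) := by exact_mod_cast hd1
      have hd0 : (d:ℝ≥0∞) ≠ 0 := Nat.cast_ne_zero.mpr hsf.ne_zero
      have hdt : (d:ℝ≥0∞) ≠ ⊤ := ENNReal.natCast_ne_top d
      have termEq : ∀ m : ℕ, H (d, m)
          = (wf d * (((d:ℝ≥0∞))^2)⁻¹) * (if x/(d:ℝ) < (m:ℝ) then (((m:ℝ≥0∞))^2)⁻¹ else 0) := by
        intro m
        have hcond : (x < ((d * m : ℕ):ℝ)) ↔ x/(d:ℝ) < (m:ℝ) := by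
          push_cast
          rw [div_lt_iff₀ hdR]
          constructor <;> intro h <;> linarith [h]
        simp only [hH]
        by_cases h : x < ((d * m : ℕ):ℝ)
        · rw [if_pos h, if_pos (hcond.mp h)]
          have : (((d * m : ℕ)) : ℝ≥0∞) = (d:ℝ≥0∞) * (m:ℝ≥0∞) := by push_cast; rfl
          rw [this, mul_pow, ENNReal.mul_inv (Or.inl (by positivity)) (Or.inl (by
            exact ENNReal.pow_ne_top hdt)), mul_assoc]
        · rw [if_neg h, if_neg (fun hc => h (hcond.mpr hc)), mul_zero]
      calc ∑' m : ℕ, H (d, m)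
          = (wf d * (((d:ℝ≥0∞))^2)⁻¹)
            * ∑' m : ℕ, (if x/(d:ℝ) < (m:ℝ) then (((m:ℝ≥0∞))^2)⁻¹ else 0) := by
            rw [← ENNReal.tsum_mul_left]
            exact tsum_congr termEq
        _ ≤ (wf d * (((d:ℝ≥0∞))^2)⁻¹) * ENNReal.ofReal (2/(x/(d:ℝ))) :=
            mul_le_mul_right (tail_sq_ennreal _ (div_pos hx hdR)) _
        _ = (wf d * ((d:ℝ≥0∞))⁻¹) * ENNReal.ofReal (2/x) := by
            have h1 : 2/(x/(d:ℝ)) = (d:ℝ) * (2/x) := by field_simp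
            rw [h1, ENNReal.ofReal_mul (by positivity), ENNReal.ofReal_natCast]
            rw [mul_assoc, mul_assoc]
            congr 1
            rw [← mul_assoc]
            congr 1
            rw [sq, ENNReal.mul_inv (Or.inl hd0) (Or.inl hdt), mul_assoc,
              ENNReal.inv_mul_cancel hd0 hdt, mul_one]
    · have hw : wf d = 0 := by rw [wf, if_neg hsf]
      have : ∀ m : ℕ, H (d, m) = 0 := by
        intro m
        simp only [hH, hw, zero_mul, ite_self]
      rw [tsum_congr this]
      simp
  calc ∑' n : ℕ, (if x < (n:ℝ) then ENNReal.ofReal (1/((n.totient:ℝ) * (n:ℝ))) else 0)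
      = _ := step1
    _ ≤ _ := step2
    _ ≤ _ := step3
    _ = Bval * ENNReal.ofReal (2/x) := by rw [Bval, ENNReal.tsum_mul_right]





lemma Bval_ne_top : Bval ≠ ⊤ := by
  have hg : Summable (fun d : ℕ => Real.sqrt 2 * (1/(d:ℝ)^(3/2:ℝ))) :=
    (Real.summable_one_div_nat_rpow.mpr (by norm_num : (1:ℝ) < 3/2)).mul_left _
  have hbound : ∀ d : ℕ, wf d * ((d : ℝ≥0∞))⁻¹
      ≤ ENNReal.ofReal (Real.sqrt 2 * (1/(d:ℝ)^(3/2:ℝ))) := by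
    intro d
    by_cases hsf : Squarefree d
    · have hd1 : 0 < d := Nat.pos_of_ne_zero hsf.ne_zero
      have hφ : 0 < d.totient := Nat.totient_pos.mpr hd1
      have hdR : (0:ℝ) < (d:ℝ) := by exact_mod_cast hd1
      have hφR : (0:ℝ) < (d.totient:ℝ) := by exact_mod_cast hφ
      have hlhs : wf d * ((d : ℝ≥0∞))⁻¹ = ENNReal.ofReal (((d.totient * d : ℕ):ℝ))⁻¹ := by
        rw [wf, if_pos hsf]
        rw [ENNReal.ofReal_inv_of_pos (by positivity : (0:ℝ) < ((d.totient * d : ℕ):ℝ))]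
        rw [ENNReal.ofReal_natCast]
        push_cast
        rw [ENNReal.mul_inv (Or.inl (by exact_mod_cast hφ.ne')) (Or.inl (ENNReal.natCast_ne_top _))]
      rw [hlhs]
      apply ENNReal.ofReal_le_ofReal
      -- real inequality: (φ d * d)⁻¹ ≤ √2 * (1/d^(3/2))
      have hnat : (d:ℝ) ≤ 2 * (d.totient:ℝ)^2 := by
        exact_mod_cast (totient_sq_lb d).2
      have hsqrt : Real.sqrt (d:ℝ) ≤ Real.sqrt 2 * (d.totient:ℝ) := by
        calc Real.sqrt (d:ℝ) ≤ Real.sqrt (2 * (d.totient:ℝ)^2) := Real.sqrt_le_sqrt hnat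
          _ = Real.sqrt 2 * (d.totient:ℝ) := by
            rw [Real.sqrt_mul (by norm_num), Real.sqrt_sq hφR.le]
      have hrpow : (d:ℝ)^(3/2:ℝ) = (d:ℝ) * Real.sqrt (d:ℝ) := by
        rw [show (3/2:ℝ) = 1 + 1/2 by norm_num, Real.rpow_add hdR, Real.rpow_one,
          ← Real.sqrt_eq_rpow]
      have hkey : (d:ℝ)^(3/2:ℝ) ≤ Real.sqrt 2 * ((d.totient:ℝ) * (d:ℝ)) := by
        rw [hrpow]
        calc (d:ℝ) * Real.sqrt (d:ℝ) ≤ (d:ℝ) * (Real.sqrt 2 * (d.totient:ℝ)) :=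
              mul_le_mul_of_nonneg_left hsqrt hdR.le
          _ = Real.sqrt 2 * ((d.totient:ℝ) * (d:ℝ)) := by ring
      have hφd : (0:ℝ) < (d.totient:ℝ) * (d:ℝ) := by positivity
      push_cast
      have hrp : (0:ℝ) < (d:ℝ)^(3/2:ℝ) := Real.rpow_pos_of_pos hdR _
      rw [mul_one_div]
      rw [le_div_iff₀ hrp]
      calc ((d.totient:ℝ) * (d:ℝ))⁻¹ * (d:ℝ)^(3/2:ℝ)
          ≤ ((d.totient:ℝ) * (d:ℝ))⁻¹ * (Real.sqrt 2 * ((d.totient:ℝ) * (d:ℝ))) :=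
            mul_le_mul_of_nonneg_left hkey (by positivity)
        _ = Real.sqrt 2 := by field_simp
    · rw [wf, if_neg hsf, zero_mul]
      exact _root_.zero_le
  exact ne_top_of_le_ne_top
    (by rw [← ENNReal.ofReal_tsum_of_nonneg (fun d => by positivity) hg]
        exact ENNReal.ofReal_ne_top)
    (ENNReal.tsum_le_tsum hbound)

end SumTotientTail

section Final
open Nat Finset
open scoped ENNReal






/-- The series `∑_{n > x} 1/(φ(n)·n)` is `O(1/x)`. -/
theorem sum_one_div_totient_mul_self_tail :
    ∃ C : ℝ, 0 < C ∧ ∀ x : ℝ, 0 < x →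
      ∑' n : {n : ℕ // x < (n : ℝ)},
        (1 : ℝ) / (((n : ℕ).totient : ℝ) * ((n : ℕ) : ℝ)) ≤ C / x := by
  refine ⟨2 * Bval.toReal + 1, by positivity, ?_⟩
  intro x hx
  have hCx : (0:ℝ) ≤ (2 * Bval.toReal + 1) / x := by positivity
  by_cases hsum : Summable (fun n : {n : ℕ // x < (n : ℝ)} =>
      (1 : ℝ) / (((n : ℕ).totient : ℝ) * ((n : ℕ) : ℝ)))
  · rw [← ENNReal.ofReal_le_ofReal_iff hCx]
    have h1 : ENNReal.ofReal (∑' n : {n : ℕ // x < (n : ℝ)},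
          (1 : ℝ) / (((n : ℕ).totient : ℝ) * ((n : ℕ) : ℝ)))
        = ∑' n : {n : ℕ // x < (n : ℝ)},
          ENNReal.ofReal ((1 : ℝ) / (((n : ℕ).totient : ℝ) * ((n : ℕ) : ℝ))) :=
      ENNReal.ofReal_tsum_of_nonneg (fun n => by positivity) hsum
    have h2 : ∑' n : {n : ℕ // x < (n : ℝ)},
          ENNReal.ofReal ((1 : ℝ) / (((n : ℕ).totient : ℝ) * ((n : ℕ) : ℝ)))
        = ∑' n : ℕ, (if x < (n:ℝ) then ENNReal.ofReal (1/((n.totient:ℝ) * (n:ℝ))) else 0) := by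
      have hts := tsum_subtype {n : ℕ | x < (n : ℝ)}
        (fun n : ℕ => ENNReal.ofReal ((1 : ℝ) / ((n.totient : ℝ) * (n : ℝ))))
      refine hts.trans (tsum_congr fun n => ?_)
      rw [Set.indicator_apply]
      simp only [Set.mem_setOf_eq]
    have h4 : Bval * ENNReal.ofReal (2/x) ≤ ENNReal.ofReal ((2 * Bval.toReal + 1) / x) := by
      conv_lhs => rw [← ENNReal.ofReal_toReal Bval_ne_top]
      rw [← ENNReal.ofReal_mul ENNReal.toReal_nonneg]
      apply ENNReal.ofReal_le_ofReal
      have h5 : Bval.toReal * (2/x) = 2*Bval.toReal/x := by ring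
      rw [h5, div_le_div_iff₀ hx hx]
      nlinarith [ENNReal.toReal_nonneg (a := Bval), hx]
    calc ENNReal.ofReal (∑' n : {n : ℕ // x < (n : ℝ)},
          (1 : ℝ) / (((n : ℕ).totient : ℝ) * ((n : ℕ) : ℝ)))
        = _ := h1
      _ = _ := h2
      _ ≤ Bval * ENNReal.ofReal (2/x) := main_ennreal x hx
      _ ≤ _ := h4
  · rw [tsum_eq_zero_of_not_summable hsum]
    positivity

end Final
end

section
/- Let n be a positive integer and m an integer that is not a perfect square. If √m ∉ ℚ(ζ_n) but √m ∈ ℚ(ζ_{2n}), then the 2-adic valuation ν_2(n) of n is 1 or 2. -/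
set_option maxHeartbeats 1000000

open Polynomial IntermediateField

/-- Even/odd decomposition: `p(z) + p(-z)` lies in the adjoin of `z^2`. -/
lemma aux_even (z : ℂ) (p : Polynomial ℚ) :
    aeval z p + aeval (-z) p ∈ Algebra.adjoin ℚ {z ^ 2} := by
  induction p using Polynomial.induction_on' with
  | add p q hp hq =>
      simp only [map_add]
      convert Subalgebra.add_mem _ hp hq using 1
      ring
  | monomial i c =>
      simp only [aeval_monomial]
      rcases Nat.even_or_odd i with he | ho
      · rw [he.neg_pow z]
        obtain ⟨k, hk⟩ := he
        have hz : z ^ i = (z ^ 2) ^ k := by rw [← pow_mul]; congr 1; omega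
        rw [hz]
        exact Subalgebra.add_mem _
          (Subalgebra.mul_mem _ (Subalgebra.algebraMap_mem _ _)
            (Subalgebra.pow_mem _ (Algebra.self_mem_adjoin_singleton ℚ _) _))
          (Subalgebra.mul_mem _ (Subalgebra.algebraMap_mem _ _)
            (Subalgebra.pow_mem _ (Algebra.self_mem_adjoin_singleton ℚ _) _))
      · rw [ho.neg_pow z]
        ring_nf
        exact Subalgebra.zero_mem _

/-- A primitive `2n`-th root of unity satisfies `ζ'^n = -1`. -/
lemma aux_pow_n {n : ℕ} (hn : 0 < n) {ζ' : ℂ} (hζ' : IsPrimitiveRoot ζ' (2 * n)) :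
    ζ' ^ n = -1 := by
  have hsq : (ζ' ^ n) ^ 2 = 1 := by rw [← pow_mul, mul_comm]; exact hζ'.pow_eq_one
  have hne : ζ' ^ n ≠ 1 := hζ'.pow_ne_one_of_pos_of_lt hn.ne' (by omega)
  have h0 : (ζ' ^ n - 1) * (ζ' ^ n + 1) = 0 := by linear_combination hsq
  rcases mul_eq_zero.mp h0 with h | h
  · exact absurd (sub_eq_zero.mp h) hne
  · linear_combination h

/-- If `m` is a nonsquare integer with `√m ∉ ℚ(ζ_n)` but `√m ∈ ℚ(ζ_{2n})`, then
`ν₂(n) ∈ {1, 2}`. -/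
theorem padicValNat_two_of_sqrt_notMem_mem
    (n : ℕ) (hn : 0 < n) (m : ℤ) (hm : ¬ IsSquare m)
    (ζ ζ' : ℂ) (hζ : IsPrimitiveRoot ζ n) (hζ' : IsPrimitiveRoot ζ' (2 * n))
    (s : ℂ) (hs : s ^ 2 = (m : ℂ))
    (h1 : s ∉ IntermediateField.adjoin ℚ {ζ})
    (h2 : s ∈ IntermediateField.adjoin ℚ {ζ'}) :
    padicValNat 2 n = 1 ∨ padicValNat 2 n = 2 := by
  haveI : NeZero n := ⟨hn.ne'⟩
  by_cases h8 : 8 ∣ n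
  · exfalso
    obtain ⟨k, hk⟩ := h8
    have hk0 : 0 < k := by omega
    have hnegone : ζ' ^ n = -1 := aux_pow_n hn hζ'
    -- the exponent `x = 4k+1` is coprime to `2n` and `x^2 ≡ n+1 [MOD 2n]`
    have hcop : Nat.Coprime (4 * k + 1) (2 * n) := by
      have h16 : Nat.Coprime (4 * k + 1) 16 := by
        have h2' : Nat.Coprime (4 * k + 1) 2 :=
          (Nat.Prime.coprime_iff_not_dvd Nat.prime_two).mpr (by omega) |>.symm
        have : (16 : ℕ) = 2 ^ 4 := by norm_num
        rw [this]; exact h2'.pow_right 4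
      have hkc : Nat.Coprime (4 * k + 1) k := by
        have := (Nat.coprime_mul_left_add_left 1 k 4).mpr (Nat.coprime_one_left k)
        simpa [mul_comm] using this
      have : 2 * n = 16 * k := by omega
      rw [this]
      exact Nat.Coprime.mul_right h16 hkc
    have hprim2 : IsPrimitiveRoot (ζ' ^ (4 * k + 1)) (2 * n) := hζ'.pow_of_coprime _ hcop
    have hint : IsIntegral ℚ ζ' := (hζ'.isIntegral (by omega)).tower_top
    have hymem : ζ' ^ (4 * k + 1) ∈ ℚ⟮ζ'⟯ := pow_mem (mem_adjoin_simple_self ℚ ζ') _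
    set y : ℚ⟮ζ'⟯ := ⟨ζ' ^ (4 * k + 1), hymem⟩ with hy_def
    have hy : aeval y (minpoly ℚ (adjoin.powerBasis hint).gen) = 0 := by
      rw [adjoin.powerBasis_gen]
      erw [minpoly_gen ℚ ζ']
      rw [← cyclotomic_eq_minpoly_rat hζ' (by omega)]
      have hmap : (algebraMap ℚ⟮ζ'⟯ ℂ) (aeval y (cyclotomic (2 * n) ℚ)) = 0 := by
        rw [← aeval_algebraMap_apply]
        have hroot := hprim2.isRoot_cyclotomic (by omega : 0 < 2 * n)
        have : (algebraMap ℚ⟮ζ'⟯ ℂ) y = ζ' ^ (4 * k + 1) := rfl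
        rw [this, aeval_def, eval₂_eq_eval_map, map_cyclotomic]
        exact hroot
      exact (_root_.map_eq_zero _).mp hmap
    set φ : ℚ⟮ζ'⟯ →ₐ[ℚ] ℚ⟮ζ'⟯ := (adjoin.powerBasis hint).lift y hy with hφ_def
    set g : ℚ⟮ζ'⟯ := AdjoinSimple.gen ℚ ζ' with hg_def
    have hφg : φ g = y := (adjoin.powerBasis hint).lift_gen y hy
    have hyg : y = g ^ (4 * k + 1) := by
      apply Subtype.ext
      push_cast
      rfl
    have hx2 : ζ' ^ ((4 * k + 1) * (4 * k + 1)) = -ζ' := by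
      have he : (4 * k + 1) * (4 * k + 1) = (2 * n) * k + (n + 1) := by
        subst hk; ring
      rw [he, pow_add, pow_mul, hζ'.pow_eq_one, one_pow, one_mul, pow_succ, hnegone]
      ring
    have hφφg : φ (φ g) = -g := by
      rw [hφg, hyg, map_pow, hφg, hyg, ← pow_mul]
      apply Subtype.ext
      push_cast
      exact hx2
    set s' : ℚ⟮ζ'⟯ := ⟨s, h2⟩ with hs'_def
    have hs2 : s' ^ 2 = (m : ℚ⟮ζ'⟯) := by
      apply Subtype.ext
      push_cast
      exact hs
    have hfix : φ (φ s') = s' := by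
      have hsq : (φ s') ^ 2 = s' ^ 2 := by
        rw [← map_pow, hs2, map_intCast]
      have h0 : (φ s' - s') * (φ s' + s') = 0 := by linear_combination hsq
      rcases mul_eq_zero.mp h0 with h | h
      · have he : φ s' = s' := sub_eq_zero.mp h
        rw [he, he]
      · have hneg : φ s' = -s' := by linear_combination h
        rw [hneg, map_neg, hneg, neg_neg]
    -- extract a polynomial representation of `s`
    have hsA : s ∈ Algebra.adjoin ℚ ({ζ'} : Set ℂ) := by
      rw [← adjoin_simple_toSubalgebra_of_isAlgebraic hint.isAlgebraic]
      exact h2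
    rw [Algebra.adjoin_singleton_eq_range_aeval] at hsA
    obtain ⟨p, hp⟩ := hsA
    replace hp : aeval ζ' p = s := hp
    have hpL : aeval g p = s' := by
      apply Subtype.ext
      have : (algebraMap ℚ⟮ζ'⟯ ℂ) (aeval g p) = aeval ζ' p := by
        rw [← aeval_algebraMap_apply]; rfl
      rw [show ((aeval g p : ℚ⟮ζ'⟯) : ℂ) = (algebraMap ℚ⟮ζ'⟯ ℂ) (aeval g p) from rfl, this, hp]
    have hps : aeval (-ζ') p = s := by
      have hchain : φ (φ (aeval g p)) = aeval (φ (φ g)) p := by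
        rw [aeval_algHom_apply, aeval_algHom_apply]
      have : (algebraMap ℚ⟮ζ'⟯ ℂ) (aeval (φ (φ g)) p) = aeval (-ζ') p := by
        rw [← aeval_algebraMap_apply, hφφg, map_neg]
        rfl
      rw [← this, ← hchain, hpL, hfix]
      rfl
    -- even/odd argument
    have hsum : s ∈ Algebra.adjoin ℚ ({ζ' ^ 2} : Set ℂ) := by
      have h := aux_even ζ' p
      rw [hp, hps] at h
      have hhalf : s = (1 / 2 : ℚ) • (s + s) := by
        rw [Rat.smul_def]
        push_cast
        ring
      rw [hhalf]
      exact Subalgebra.smul_mem _ h _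
    have hζ2 : (ζ' : ℂ) ^ 2 ∈ IntermediateField.adjoin ℚ {ζ} := by
      have hpow : (ζ' ^ 2) ^ n = 1 := by rw [← pow_mul]; exact hζ'.pow_eq_one
      obtain ⟨i, -, hi⟩ := hζ.eq_pow_of_pow_eq_one hpow
      rw [← hi]
      exact pow_mem (mem_adjoin_simple_self ℚ ζ) i
    have hle : Algebra.adjoin ℚ ({ζ' ^ 2} : Set ℂ) ≤
        (IntermediateField.adjoin ℚ {ζ}).toSubalgebra :=
      Algebra.adjoin_le (Set.singleton_subset_iff.2 hζ2)
    exact h1 (hle hsum)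
  · by_cases hd2 : 2 ∣ n
    · have hv1 : 1 ≤ padicValNat 2 n := one_le_padicValNat_of_dvd hn.ne' hd2
      have hv2 : padicValNat 2 n ≤ 2 := by
        by_contra hgt
        push_neg at hgt
        exact h8 (dvd_trans (pow_dvd_pow 2 (by omega : 3 ≤ padicValNat 2 n))
          pow_padicValNat_dvd)
      omega
    · exfalso
      have hodd : Odd n := Nat.odd_iff.2 (by omega)
      have hnegone : ζ' ^ n = -1 := aux_pow_n hn hζ'
      have hpow : (-ζ') ^ n = 1 := by rw [hodd.neg_pow, hnegone, neg_neg]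
      obtain ⟨i, -, hi⟩ := hζ.eq_pow_of_pow_eq_one hpow
      have hmem : ζ' ∈ IntermediateField.adjoin ℚ {ζ} := by
        have : ζ' = -(ζ ^ i) := by rw [hi]; ring
        rw [this]
        exact neg_mem (pow_mem (mem_adjoin_simple_self ℚ ζ) i)
      exact h1 (adjoin_le_iff.2 (Set.singleton_subset_iff.2 hmem) h2)
end

section
/- Let F be a field of characteristic zero and let X⁴ + aX² + b ∈ F[X] be irreducible. If b is a square in F, then the Galois group of the splitting field of X⁴ + aX² + b over F is isomorphic to C₂ × C₂ (the Klein four-group). -/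
open Polynomial IntermediateField

/-- If `X⁴ + aX² + b` is irreducible over a field `F` of characteristic zero and `b` is a
square in `F`, then its Galois group is isomorphic to the Klein four-group `C₂ × C₂`. -/
theorem gal_biquadratic_of_isSquare {F : Type*} [Field F] [CharZero F] (a b : F)
    (hirr : Irreducible (X ^ 4 + C a * X ^ 2 + C b))
    (hb : IsSquare b) :
    Nonempty ((X ^ 4 + C a * X ^ 2 + C b).Gal ≃* Multiplicative (ZMod 2 × ZMod 2)) := by
  obtain ⟨c, hc⟩ := hb
  set p : F[X] := X ^ 4 + C a * X ^ 2 + C b with hp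
  have hpdeg : p.natDegree = 4 := by rw [hp]; compute_degree!
  have hpm : p.Monic := by
    have h4 : p = X ^ 4 + (C a * X ^ 2 + C b) := by rw [hp]; ring
    rw [h4]
    apply Polynomial.monic_X_pow_add
    have h1 : (C a * X ^ 2 + C b).degree ≤ 2 := by compute_degree
    exact lt_of_le_of_lt h1 (by norm_num)
  have hb0 : b ≠ 0 := by
    intro h
    subst h
    have hfac : p = X ^ 2 * (X ^ 2 + C a) := by
      rw [hp]; simp only [map_zero, add_zero]; ring
    rcases hirr.isUnit_or_isUnit hfac with h1 | h1
    · exact Polynomial.not_isUnit_of_natDegree_pos _ (by simp) h1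
    · refine Polynomial.not_isUnit_of_natDegree_pos _ ?_ h1
      have : (X ^ 2 + C a).natDegree = 2 := by compute_degree!
      omega
  have hc0 : c ≠ 0 := fun h => hb0 (by rw [hc, h, mul_zero])
  have hsep : p.Separable := hirr.separable
  haveI : Fact p.Separable := ⟨hsep⟩
  set L := p.SplittingField with hL
  have hsplit : Splits (p.map (algebraMap F L)) := SplittingField.splits p
  have hdeg0 : p.degree ≠ 0 := by
    rw [Polynomial.degree_eq_natDegree hpm.ne_zero, hpdeg]; norm_num
  obtain ⟨α, hα⟩ := hsplit.exists_eval_eq_zero (by rwa [degree_map])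
  have hα' : aeval α p = 0 := by rw [aeval_def, ← eval_map]; exact hα
  set A : F →+* L := algebraMap F L with hA
  have hαeq : α ^ 4 + A a * α ^ 2 + A b = 0 := by
    have := hα'
    simp only [hp, map_add, map_mul, map_pow, aeval_X, aeval_C] at this
    exact this
  have hα0 : α ≠ 0 := by
    intro h
    rw [h] at hαeq
    simp only [ne_eq, OfNat.ofNat_ne_zero, not_false_eq_true, zero_pow, mul_zero,
      zero_add, add_zero] at hαeq
    exact hb0 ((algebraMap F L).injective (by rw [map_zero]; exact hαeq))
  have hAc0 : A c ≠ 0 := fun h => hc0 ((algebraMap F L).injective (by rw [map_zero]; exact h))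
  obtain ⟨β, hβ⟩ : ∃ β : L, β = A c / α := ⟨_, rfl⟩
  have hβα : β * α = A c := by rw [hβ]; exact div_mul_cancel₀ _ hα0
  have hAb : A b = A c * A c := by rw [hc, map_mul]
  have hβ2 : β ^ 2 = -(A a) - α ^ 2 := by
    have h1 : β ^ 2 * α ^ 2 = A c * A c := by rw [← mul_pow, hβα]; ring
    have h2 : (-(A a) - α ^ 2) * α ^ 2 = A c * A c := by
      rw [← hAb]; linear_combination -hαeq
    exact mul_right_cancel₀ (pow_ne_zero 2 hα0) (h1.trans h2.symm)
  have hβ0 : β ≠ 0 := by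
    intro h
    rw [h, zero_mul] at hβα
    exact hAc0 hβα.symm
  -- classification of roots
  have key : ∀ x : L, x ^ 4 + A a * x ^ 2 + A b = 0 →
      x = α ∨ x = -α ∨ x = β ∨ x = -β := by
    intro x hx
    have hprod : α ^ 2 * β ^ 2 = A b := by rw [hAb, ← hβα]; ring
    have h : (x - α) * (x + α) * ((x - β) * (x + β)) = 0 := by
      linear_combination hx - x ^ 2 * hβ2 + hprod
    rcases mul_eq_zero.mp h with h | h
    · rcases mul_eq_zero.mp h with h | h
      · exact Or.inl (sub_eq_zero.mp h)
      · exact Or.inr (Or.inl (eq_neg_of_add_eq_zero_left h))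
    · rcases mul_eq_zero.mp h with h | h
      · exact Or.inr (Or.inr (Or.inl (sub_eq_zero.mp h)))
      · exact Or.inr (Or.inr (Or.inr (eq_neg_of_add_eq_zero_left h)))
  have hroot_mem : ∀ x ∈ p.rootSet L, x = α ∨ x = -α ∨ x = β ∨ x = -β := by
    intro x hx
    rw [Polynomial.mem_rootSet] at hx
    apply key
    have := hx.2
    simp only [hp, map_add, map_mul, map_pow, aeval_X, aeval_C] at this
    exact this
  -- F⟮α⟯ = ⊤
  have hint : IsIntegral F α := ⟨p, hpm, hα'⟩
  have hadj : Algebra.adjoin F (p.rootSet L) = ⊤ :=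
    Polynomial.IsSplittingField.adjoin_rootSet L p
  have hsub : F⟮α⟯.toSubalgebra = ⊤ := by
    rw [eq_top_iff, ← hadj, Algebra.adjoin_le_iff]
    intro x hx
    have hmemα : α ∈ F⟮α⟯ := IntermediateField.mem_adjoin_simple_self F α
    have hmemβ : β ∈ F⟮α⟯ := by
      rw [hβ]
      exact div_mem (IntermediateField.algebraMap_mem _ c) hmemα
    rcases hroot_mem x hx with rfl | rfl | rfl | rfl
    · exact hmemα
    · exact neg_mem hmemα
    · exact hmemβ
    · exact neg_mem hmemβ
  have htop : F⟮α⟯ = ⊤ := IntermediateField.toSubalgebra_injective (by rw [hsub]; rfl)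
  have hmin : minpoly F α = p := (minpoly.eq_of_irreducible_of_monic hirr hα' hpm).symm
  have h1 : Module.finrank F F⟮α⟯ = 4 := by
    rw [IntermediateField.adjoin.finrank hint, hmin]; exact hpdeg
  have hfinrank : Module.finrank F L = 4 := by
    rw [← IntermediateField.finrank_top', ← htop]; exact h1
  -- card of the Galois group
  have hcard : Nat.card p.Gal = 4 := by
    rw [Polynomial.Gal.card_of_separable hsep]
    exact hfinrank
  -- every element squares to 1
  have hsq : ∀ σ : p.Gal, σ ^ 2 = 1 := by
    intro σ
    have hσroot : σ α = α ∨ σ α = -α ∨ σ α = β ∨ σ α = -β := by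
      apply key
      have h0 := congrArg σ hαeq
      simp only [map_add, map_mul, map_pow, map_zero] at h0
      rwa [hA, AlgHomClass.commutes σ, AlgHomClass.commutes σ, ← hA] at h0
    have hσβ : σ β = A c / σ α := by
      rw [hβ, map_div₀, hA, AlgHomClass.commutes σ]
    have hfixα : σ (σ α) = α := by
      rcases hσroot with h | h | h | h
      · rw [h, h]
      · rw [h, map_neg, h, neg_neg]
      · have hσβ' : σ β = A c / β := by rw [hσβ, h]
        rw [h, hσβ', hβ, div_div_eq_mul_div]
        exact mul_div_cancel_left₀ α hAc0
      · have hσβ' : σ β = A c / (-β) := by rw [hσβ, h]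
        rw [h, map_neg, hσβ', hβ, div_neg, neg_neg, div_div_eq_mul_div]
        exact mul_div_cancel_left₀ α hAc0
    have hfixβ : σ (σ β) = β := by
      rw [hσβ, map_div₀, hA, AlgHomClass.commutes σ, ← hA, hfixα, hβ]
    have hmul : (σ * σ : p.Gal) = 1 := by
      apply AlgEquiv.coe_algHom_injective
      apply AlgHom.ext_of_adjoin_eq_top hadj
      intro x hx
      show (σ * σ) x = x
      change σ (σ x) = x
      rcases hroot_mem x hx with rfl | rfl | rfl | rfl
      · exact hfixα
      · rw [map_neg, map_neg, hfixα]
      · exact hfixβ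
      · rw [map_neg, map_neg, hfixβ]
    rw [pow_two]
    exact hmul
  haveI hKF : IsKleinFour p.Gal := by
    constructor
    · exact hcard
    · haveI hnt : Nontrivial p.Gal := by
        have h4 : Fintype.card p.Gal = 4 := by rw [← Nat.card_eq_fintype_card]; exact hcard
        exact Fintype.one_lt_card_iff_nontrivial.mp (by omega)
      have hdvd : Monoid.exponent p.Gal ∣ 2 :=
        Monoid.exponent_dvd_of_forall_pow_eq_one hsq
      rcases Nat.prime_two.eq_one_or_self_of_dvd _ hdvd with h | h
      · exfalso
        obtain ⟨g, hg⟩ := exists_ne (1 : p.Gal)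
        have := Monoid.pow_exponent_eq_one g
        rw [h, pow_one] at this
        exact hg this
      · exact h
  exact IsKleinFour.nonempty_mulEquiv
end

section
/- Let F be a field of characteristic zero and let X⁴ + aX² + b ∈ F[X] be irreducible. If b is not a square in F but b(a² − 4b) is a square in F, then the Galois group of its splitting field over F is cyclic of order 4. -/
open Polynomial

/-- If `X⁴ + aX² + b` is irreducible over a field `F` of characteristic zero, `b` is not a
square in `F` but `b(a² - 4b)` is, then its Galois group is cyclic of order 4. -/
theorem gal_biquadratic_cyclic {F : Type*} [Field F] [CharZero F] (a b : F)
    (hirr : Irreducible (X ^ 4 + C a * X ^ 2 + C b))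
    (hb : ¬ IsSquare b) (hb' : IsSquare (b * (a ^ 2 - 4 * b))) :
    Nonempty ((X ^ 4 + C a * X ^ 2 + C b).Gal ≃* Multiplicative (ZMod 4)) := by
  set p : F[X] := X ^ 4 + C a * X ^ 2 + C b with hp
  have hpmonic : p.Monic := by
    unfold p; monicity!
  have hpdeg : p.natDegree = 4 := by
    unfold p; compute_degree!
  set L := p.SplittingField with hL
  set A : F →+* L := algebraMap F L with hA
  -- a root α
  obtain ⟨α, hα⟩ := Polynomial.Splits.exists_eval_eq_zero
    (Polynomial.SplittingField.splits p)
    (by rw [Polynomial.degree_map, Polynomial.degree_eq_natDegree hpmonic.ne_zero, hpdeg]; norm_num)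
  have hαroot : aeval α p = 0 := by rwa [aeval_def, ← eval_map]
  have haeval : ∀ x : L, aeval x p = x ^ 4 + A a * x ^ 2 + A b := by
    intro x
    simp only [hp, map_add, map_mul, map_pow, aeval_X, aeval_C]
    rfl
  have hroot : α ^ 4 + A a * α ^ 2 + A b = 0 := by rw [← haeval]; exact hαroot
  have hminα : minpoly F α = p :=
    (minpoly.eq_of_irreducible_of_monic hirr hαroot hpmonic).symm
  -- nonvanishing facts
  have hb0 : b ≠ 0 := fun h => hb ⟨0, by rw [h]; ring⟩
  have hα0 : α ≠ 0 := by
    intro h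
    apply hb0
    have hb1 : A b = 0 := by rw [h] at hroot; simpa using hroot
    exact (_root_.map_eq_zero A).mp hb1
  have hd0 : 2 * α ^ 2 + A a ≠ 0 := by
    intro h
    have hq : aeval α (C 2 * X ^ 2 + C a : F[X]) = 0 := by
      simp only [map_add, map_mul, map_pow, aeval_X, aeval_C]
      rw [map_ofNat]; exact h
    have hqne : (C 2 * X ^ 2 + C a : F[X]) ≠ 0 := by
      intro hzero
      have : ((C 2 * X ^ 2 + C a : F[X])).coeff 2 = 0 := by rw [hzero]; simp
      simp at this
    have hle := minpoly.degree_le_of_ne_zero F α hqne hq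
    rw [hminα, Polynomial.degree_eq_natDegree hpmonic.ne_zero, hpdeg] at hle
    have hdegq : (C 2 * X ^ 2 + C a : F[X]).degree ≤ 2 := by
      compute_degree
    exact absurd (hle.trans hdegq) (by norm_num)
  have hsqd : (2 * α ^ 2 + A a) ^ 2 = A a ^ 2 - 4 * A b := by
    linear_combination 4 * hroot
  have hΔL : A a ^ 2 - 4 * A b ≠ 0 := by
    rw [← hsqd]; exact pow_ne_zero _ hd0
  have hΔ : a ^ 2 - 4 * b ≠ 0 := by
    intro h
    apply hΔL
    have : A (a ^ 2 - 4 * b) = A a ^ 2 - 4 * A b := by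
      push_cast [map_sub, map_mul, map_pow, map_ofNat]; ring
    rw [← this, h, map_zero]
  obtain ⟨r, hr⟩ := hb'
  have hr0 : r ≠ 0 := by
    intro h; rw [h, mul_zero] at hr; exact (mul_ne_zero hb0 hΔ) hr
  have hAr0 : A r ≠ 0 := fun h => hr0 ((_root_.map_eq_zero A).mp h)
  have hrr : A r * A r = A b * (A a ^ 2 - 4 * A b) := by
    rw [← map_mul, ← hr, map_mul]
    congr 1
    push_cast [map_sub, map_mul, map_pow, map_ofNat]; ring
  set β : L := A r / ((2 * α ^ 2 + A a) * α) with hβdef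
  have hne : (2 * α ^ 2 + A a) * α ≠ 0 := mul_ne_zero hd0 hα0
  have hβsq : β ^ 2 = -(A a) - α ^ 2 := by
    rw [hβdef, div_pow, div_eq_iff (pow_ne_zero _ hne), sq, hrr]
    linear_combination (A a ^ 2 - 4 * A b) * hroot + (A a + α ^ 2) * α ^ 2 * hsqd
  have hβroot : aeval β p = 0 := by
    rw [haeval]
    linear_combination hroot + (β ^ 2 - α ^ 2) * hβsq
  have hminβ : minpoly F β = p :=
    (minpoly.eq_of_irreducible_of_monic hirr hβroot hpmonic).symm
  -- The splitting field is F(α)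
  set K : IntermediateField F L := IntermediateField.adjoin F {α} with hK
  have hαK : α ∈ K := IntermediateField.mem_adjoin_simple_self F α
  have h2K : (2 : L) ∈ K := by
    rw [← one_add_one_eq_two]; exact K.add_mem K.one_mem K.one_mem
  have hβK : β ∈ K := by
    apply K.div_mem (K.algebraMap_mem r)
    exact K.mul_mem (K.add_mem (K.mul_mem h2K (pow_mem hαK 2))
      (K.algebraMap_mem a)) hαK
  have hrootsK : p.rootSet L ⊆ (K : Set L) := by
    intro x hx
    have hx' : x ^ 4 + A a * x ^ 2 + A b = 0 := by
      rw [← haeval]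
      exact (Polynomial.mem_rootSet.mp hx).2
    have hfac : (x - α) * (x + α) * (x - β) * (x + β) = 0 := by
      linear_combination hx' - hroot + (α ^ 2 - x ^ 2) * hβsq
    rcases mul_eq_zero.mp hfac with h | h
    · rcases mul_eq_zero.mp h with h | h
      · rcases mul_eq_zero.mp h with h | h
        · rw [sub_eq_zero] at h; rw [h]; exact hαK
        · rw [add_eq_zero_iff_eq_neg] at h; rw [h]; exact K.neg_mem hαK
      · rw [sub_eq_zero] at h; rw [h]; exact hβK
    · rw [add_eq_zero_iff_eq_neg] at h; rw [h]; exact K.neg_mem hβK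
  have hKtop : K = ⊤ := by
    have hle : (⊤ : Subalgebra F L) ≤ K.toSubalgebra := by
      rw [← Polynomial.SplittingField.adjoin_rootSet p]
      exact Algebra.adjoin_le hrootsK
    ext x
    simp only [IntermediateField.mem_top, iff_true]
    exact hle (Algebra.mem_top : x ∈ (⊤ : Subalgebra F L))
  have hint : IsIntegral F α := IsIntegral.of_finite F α
  have hfinrank : Module.finrank F L = 4 := by
    rw [← IntermediateField.finrank_top' (F := F) (E := L), ← hKtop, hK,
      IntermediateField.adjoin.finrank hint, hminα, hpdeg]
  have hcard : Fintype.card p.Gal = 4 := by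
    rw [← Nat.card_eq_fintype_card, Polynomial.Gal.card_of_separable hirr.separable]
    exact hfinrank
  -- the automorphism sending α to β
  have horb : β ∈ MulAction.orbit (L ≃ₐ[F] L) α :=
    (Normal.minpoly_eq_iff_mem_orbit L).mp (hminβ.trans hminα.symm)
  obtain ⟨σ, hσα⟩ := horb
  have hσα' : σ α = β := hσα
  have hσd : σ (A a) = A a := σ.commutes a
  have hβ0 : β ≠ 0 := by
    rw [hβdef]; exact div_ne_zero hAr0 hne
  have hσβ : σ β = -α := by
    have h1 : σ β = A r / ((2 * β ^ 2 + A a) * β) := by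
      rw [hβdef, map_div₀, map_mul, map_add, map_mul, map_pow, hσα']
      simp [σ.commutes, map_ofNat]
      rw [show σ (A r) = A r from σ.commutes r, hσd, ← hβdef]
    have h2 : 2 * β ^ 2 + A a = -(2 * α ^ 2 + A a) := by
      linear_combination 2 * hβsq
    have h3 : (2 * α ^ 2 + A a) * β = A r / α := by
      rw [hβdef]
      rw [mul_div_assoc', div_eq_div_iff hne hα0]
      ring
    rw [h1, h2, neg_mul, div_neg, neg_inj, h3, div_div_eq_mul_div, mul_comm,
      mul_div_assoc, div_self hAr0, mul_one]
  -- σ has order 4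
  have hσσ : σ (σ α) = -α := by rw [hσα', hσβ]
  have hneq : σ (σ α) ≠ α := by
    rw [hσσ]
    intro h
    apply hα0
    have h2 : (2 : L) * α = 0 := by linear_combination -h
    have : (2 : L) ≠ 0 := two_ne_zero
    exact (mul_eq_zero.mp h2).resolve_left this
  set σg : p.Gal := σ with hσg
  have hσ2 : σg ^ 2 ≠ 1 := by
    intro h
    apply hneq
    have := congrArg (fun ψ : p.Gal => ψ α) h
    exact this
  have hdvd : orderOf σg ∣ 4 := by
    have := orderOf_dvd_card (x := σg)
    rwa [hcard] at this
  have hord : orderOf σg = 4 := by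
    have hle : orderOf σg ≤ 4 := Nat.le_of_dvd (by norm_num) hdvd
    have hpos : 0 < orderOf σg := orderOf_pos σg
    interval_cases h : orderOf σg
    · exfalso; apply hσ2
      rw [orderOf_eq_one_iff.mp h, one_pow]
    · exfalso; apply hσ2
      have hpow := pow_orderOf_eq_one σg
      rwa [h] at hpow
    · exact absurd hdvd (by norm_num)
    · rfl
  have hcyc : IsCyclic p.Gal := isCyclic_of_orderOf_eq_card σg
    (by rw [hord, Nat.card_eq_fintype_card, hcard])
  have hzcyc : IsCyclic (Multiplicative (ZMod 4)) := inferInstance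
  exact ⟨mulEquivOfCyclicCardEq (by
    rw [Nat.card_eq_fintype_card, hcard]
    simp [Nat.card_eq_fintype_card])⟩
end

section
/- Let F be a field of characteristic zero and let X⁴ + aX² + b ∈ F[X] be irreducible. If neither b nor b(a² − 4b) is a square in F, then the Galois group of its splitting field over F is isomorphic to the dihedral group of order 8. -/
open Pointwise
open Polynomial IntermediateField

def dmap : DihedralGroup 4 → Equiv.Perm (Fin 4)
  | .r i => (finRotate 4) ^ i.val
  | .sr i => Equiv.swap 1 3 * (finRotate 4) ^ i.val

def dhom : DihedralGroup 4 →* Equiv.Perm (Fin 4) where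
  toFun := dmap
  map_one' := by decide
  map_mul' := by decide

lemma dhom_inj : Function.Injective dhom := by decide

lemma perm4_card8 (H : Subgroup (Equiv.Perm (Fin 4))) (hH : Nat.card H = 8) :
    Nonempty (H ≃* DihedralGroup 4) := by
  have hfact : Fact (Nat.Prime 2) := ⟨Nat.prime_two⟩
  have hcard : Nat.card (Equiv.Perm (Fin 4)) = 24 := by
    simp [Nat.card_eq_fintype_card, Fintype.card_perm]; rfl
  have hfac : 2 ^ (Nat.card (Equiv.Perm (Fin 4))).factorization 2 = 8 := by
    rw [hcard, show (24:ℕ) = 2 ^ 3 * 3 by norm_num,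
      Nat.factorization_mul (by norm_num) (by norm_num)]
    rw [show ((2:ℕ) ^ 3 = 8) from by norm_num] at *
    rw [show ((8:ℕ).factorization = Finsupp.single 2 3) from by
      rw [show (8:ℕ) = 2 ^ 3 by norm_num]; exact Nat.Prime.factorization_pow Nat.prime_two]
    simp [Nat.Prime.factorization Nat.prime_three]
  have e1 : DihedralGroup 4 ≃* dhom.range := MonoidHom.ofInjective dhom_inj
  have hK : Nat.card dhom.range = 8 := by
    rw [← Nat.card_congr e1.toEquiv]
    simp [Nat.card_eq_fintype_card, DihedralGroup.card]
  obtain ⟨g, hg⟩ := MulAction.exists_smul_eq (Equiv.Perm (Fin 4))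
    (Sylow.ofCard H (by rw [hH, ← hfac])) (Sylow.ofCard dhom.range (by rw [hK, ← hfac]))
  have hsub : (MulAut.conj g • H : Subgroup _) = dhom.range := by
    have := congrArg (Sylow.toSubgroup) hg
    rwa [Sylow.smul_def, Sylow.pointwise_smul_def, Sylow.coe_ofCard, Sylow.coe_ofCard] at this
  exact ⟨((Subgroup.equivSMul (MulAut.conj g) H).trans
    (MulEquiv.subgroupCongr hsub)).trans e1.symm⟩


def permMulEquiv {α β : Type*} (e : α ≃ β) : Equiv.Perm α ≃* Equiv.Perm β :=
  { e.permCongr with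
    map_mul' := fun σ τ => by
      ext x
      simp [Equiv.permCongr, Equiv.Perm.mul_apply] }

section Key
variable {F L : Type*} [Field F] [CharZero F] [Field L] [Algebra F L]
variable {F L : Type*} [Field F] [CharZero F] [Field L] [Algebra F L]

lemma key_no_sqrt (a b : F) (hb : ¬ IsSquare b) (hb' : ¬ IsSquare (b * (a ^ 2 - 4 * b)))
    (hirr : Irreducible (X ^ 4 + C a * X ^ 2 + C b))
    {α : L} (hα : (aeval α) (X ^ 4 + C a * X ^ 2 + C b) = 0)
    {t : L} (htmem : t ∈ F⟮α⟯) (ht : t ^ 2 = algebraMap F L b) : False := by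
  set p : F[X] := X ^ 4 + C a * X ^ 2 + C b with hp
  set A := algebraMap F L with hA
  have hbne : b ≠ 0 := fun h => hb (h ▸ ⟨0, by ring⟩)
  have pmonic : p.Monic := by rw [hp]; monicity!
  have pdeg : p.natDegree = 4 := by rw [hp]; compute_degree!
  have hαr : α ^ 4 + A a * α ^ 2 + A b = 0 := by
    have := hα
    simp only [hp, map_add, map_mul, map_pow, aeval_X, aeval_C] at this
    exact this
  have hint : IsIntegral F α := ⟨p, pmonic, hα⟩
  have hmin : minpoly F α = p := (minpoly.eq_of_irreducible_of_monic hirr hα pmonic).symm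
  -- linear independence of 1, α, α², α³
  have li := linearIndependent_pow (K := F) (S := L) α
  rw [hmin, pdeg] at li
  have hli := Fintype.linearIndependent_iff.mp li
  -- representation of t
  have htmem' : t ∈ Algebra.adjoin F {α} := by
    rw [← adjoin_simple_toSubalgebra_of_isAlgebraic hint.isAlgebraic]; exact htmem
  rw [Algebra.adjoin_singleton_eq_range_aeval, AlgHom.mem_range] at htmem'
  obtain ⟨g0, hg0⟩ := htmem'
  have pne1 : p ≠ 1 := fun h => by simp [h] at pdeg
  set g : F[X] := g0 %ₘ p with hgdef
  have hgdeg : g.natDegree < 4 := by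
    have h2 := natDegree_modByMonic_lt g0 pmonic pne1
    rw [← hgdef] at h2; omega
  have hgt : aeval α g = t := by
    have hdm := modByMonic_add_div g0 p
    have h3 : aeval α (g0 %ₘ p + p * (g0 /ₘ p)) = aeval α g0 := by rw [hdm]
    rw [map_add, map_mul, hα, zero_mul, add_zero] at h3
    rw [hgdef, h3, hg0]
  set c : ℕ → F := fun i => g.coeff i with hc
  have hrep : t = A (c 0) + A (c 1) * α + A (c 2) * α ^ 2 + A (c 3) * α ^ 3 := by
    rw [← hgt, aeval_eq_sum_range' hgdeg]
    simp [Finset.sum_range_succ, Algebra.smul_def]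
    rfl
  rw [hrep] at ht
  -- main coefficient equations
  set E0 : F := c 0 ^ 2 - b * c 2 ^ 2 + a * b * c 3 ^ 2 - 2 * b * c 1 * c 3 - b with hE0
  set E1 : F := 2 * (c 0 * c 1 - b * c 2 * c 3) with hE1
  set E2 : F := c 1 ^ 2 - a * c 2 ^ 2 + (a ^ 2 - b) * c 3 ^ 2 + 2 * c 0 * c 2
      - 2 * a * c 1 * c 3 with hE2
  set E3 : F := 2 * (c 0 * c 3 + c 1 * c 2 - a * c 2 * c 3) with hE3
  have hmain : A E0 + A E1 * α + A E2 * α ^ 2 + A E3 * α ^ 3 = 0 := by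
    simp only [hE0, hE1, hE2, hE3, map_add, map_sub, map_mul, map_pow, map_ofNat, map_one]
    linear_combination ht - (A (c 2) ^ 2 + 2 * A (c 1) * A (c 3) - A a * A (c 3) ^ 2
      + 2 * A (c 2) * A (c 3) * α + A (c 3) ^ 2 * α ^ 2) * hαr
  have hcoeff : ∀ i : Fin 4, (![E0, E1, E2, E3] : Fin 4 → F) i = 0 := by
    apply hli
    rw [Fin.sum_univ_four]
    simpa [Algebra.smul_def] using hmain
  have he0 : E0 = 0 := hcoeff 0
  have he2 : E2 = 0 := hcoeff 2
  have htwo : (2 : F) ≠ 0 := two_ne_zero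
  have he1 : c 0 * c 1 - b * c 2 * c 3 = 0 := by
    have h := hcoeff 1
    simp only [Matrix.cons_val_one, Matrix.head_cons, hE1] at h
    rcases mul_eq_zero.mp h with h' | h'
    · exact absurd h' htwo
    · exact h'
  have he3 : c 0 * c 3 + c 1 * c 2 - a * c 2 * c 3 = 0 := by
    have h := hcoeff 3
    simp only [hE3] at h
    have h : (2 : F) * (c 0 * c 3 + c 1 * c 2 - a * c 2 * c 3) = 0 := h
    rcases mul_eq_zero.mp h with h' | h'
    · exact absurd h' htwo
    · exact h'
  -- u * v = 0
  have hAe1 : A (c 0) * A (c 1) - A b * A (c 2) * A (c 3) = 0 := by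
    have := congrArg A he1; simpa [map_sub, map_mul] using this
  have hAe3 : A (c 0) * A (c 3) + A (c 1) * A (c 2) - A a * A (c 2) * A (c 3) = 0 := by
    have := congrArg A he3; simpa [map_add, map_sub, map_mul] using this
  have huv : (A (c 0) + A (c 2) * α ^ 2) * (A (c 1) * α + A (c 3) * α ^ 3) = 0 := by
    linear_combination (A (c 2) * A (c 3) * α) * hαr + α * hAe1 + α ^ 3 * hAe3
  rcases mul_eq_zero.mp huv with hu | hv
  · -- even part is zero : c 0 = 0, c 2 = 0 ; odd case analysis
    have hz := hli ![c 0, 0, c 2, 0] (by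
      rw [Fin.sum_univ_four]
      simpa [Algebra.smul_def] using hu)
    have hc0 : c 0 = 0 := hz 0
    have hc2 : c 2 = 0 := hz 2
    rw [hE0, hc0, hc2] at he0
    rw [hE2, hc0, hc2] at he2
    -- he0 : a*b*c3² - 2b c1 c3 - b = 0 ; he2 : c1² + (a²-b) c3² - 2a c1 c3 = 0
    have hc3 : c 3 ≠ 0 := by
      intro h; rw [h] at he0; simp at he0; exact hbne he0
    apply hb
    refine ⟨(c 1 - a * c 3) / c 3, ?_⟩
    field_simp
    linear_combination -he2
  · -- odd part is zero : c 1 = 0, c 3 = 0 ; even case analysis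
    have hz := hli ![0, c 1, 0, c 3] (by
      rw [Fin.sum_univ_four]
      simpa [Algebra.smul_def] using hv)
    have hc1 : c 1 = 0 := hz 1
    have hc3 : c 3 = 0 := hz 3
    rw [hE0, hc1, hc3] at he0
    rw [hE2, hc1, hc3] at he2
    -- he0 : c0² - b c2² - b = 0 ; he2 : -a c2² + 2 c0 c2 = 0
    by_cases hc2 : c 2 = 0
    · rw [hc2] at he0
      exact hb ⟨c 0, by linear_combination -he0⟩
    · have h2c0 : 2 * c 0 = a * c 2 := by
        have : c 2 * (2 * c 0 - a * c 2) = 0 := by linear_combination he2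
        rcases mul_eq_zero.mp this with h' | h'
        · exact absurd h' hc2
        · linear_combination h'
      have hkey : c 2 ^ 2 * (a ^ 2 - 4 * b) = 4 * b := by
        linear_combination 4 * he0 - (2 * c 0 + a * c 2) * h2c0
      have hane : a ^ 2 - 4 * b ≠ 0 := by
        intro h; rw [h] at hkey; simp at hkey
        exact hbne hkey
      apply hb'
      refine ⟨c 2 * (a ^ 2 - 4 * b) / 2, ?_⟩
      linear_combination (-(a ^ 2 - 4 * b) / 4) * hkey
end Key

/-- If `X⁴ + aX² + b` is irreducible over a field `F` of characteristic zero and neither `b`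
nor `b(a² - 4b)` is a square in `F`, then its Galois group is the dihedral group of order 8. -/
theorem gal_biquadratic_dihedral {F : Type*} [Field F] [CharZero F] (a b : F)
    (hirr : Irreducible (X ^ 4 + C a * X ^ 2 + C b))
    (hb : ¬ IsSquare b) (hb' : ¬ IsSquare (b * (a ^ 2 - 4 * b))) :
    Nonempty ((X ^ 4 + C a * X ^ 2 + C b).Gal ≃* DihedralGroup 4) := by
  classical
  set p : F[X] := X ^ 4 + C a * X ^ 2 + C b with hp
  have pmonic : p.Monic := by rw [hp]; monicity!
  have pdeg : p.natDegree = 4 := by rw [hp]; compute_degree!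
  have hbne : b ≠ 0 := fun h => hb (h ▸ ⟨0, by ring⟩)
  set L := p.SplittingField with hL
  set A := algebraMap F L with hA
  haveI : CharZero L := charZero_of_injective_algebraMap A.injective
  have hsplits : Splits (p.map A) := SplittingField.splits p
  have hsep : p.Separable := hirr.separable
  have pmapne : p.map A ≠ 0 := (Polynomial.map_ne_zero_iff A.injective).mpr pmonic.ne_zero
  have haev : ∀ r : L, aeval r p = r ^ 4 + A a * r ^ 2 + A b := by
    intro r; simp [hp, map_add, map_mul, map_pow, aeval_X, aeval_C]; rfl
  have hnd : (p.map A).roots.Nodup := nodup_roots (hsep.map)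
  have hcard : Multiset.card (p.map A).roots = 4 := by
    have h1 := splits_iff_card_roots.mp hsplits
    rw [natDegree_map] at h1
    rw [h1, pdeg]
  have hmem : ∀ r : L, r ∈ (p.map A).roots ↔ r ^ 4 + A a * r ^ 2 + A b = 0 := by
    intro r
    rw [mem_roots pmapne, IsRoot.def, eval_map, ← aeval_def, haev]
  -- pick roots α and γ
  have hne0 : (p.map A).roots ≠ 0 := by
    intro h; rw [h] at hcard; simp at hcard
  obtain ⟨α, hαmem⟩ := Multiset.exists_mem_of_ne_zero hne0
  have hα4 : α ^ 4 + A a * α ^ 2 + A b = 0 := (hmem α).mp hαmem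
  have hα0 : α ≠ 0 := by
    intro h
    rw [h] at hα4
    simp at hα4
    exact hbne hα4
  have hneα : -α ≠ α := fun h => hα0 (by
    have h2 : α + α = 0 := by linear_combination -h
    exact add_self_eq_zero.mp h2)
  have hnegαmem : -α ∈ (p.map A).roots := by
    rw [hmem]; linear_combination hα4
  -- pick γ
  set m0 : Multiset L := ((p.map A).roots.erase α).erase (-α) with hm0
  have hnd1 : ((p.map A).roots.erase α).Nodup := hnd.erase α
  have hnegα1 : -α ∈ (p.map A).roots.erase α := (Multiset.mem_erase_of_ne hneα).mpr hnegαmem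
  have hm0card : Multiset.card m0 = 2 := by
    rw [hm0, Multiset.card_erase_of_mem hnegα1, Multiset.card_erase_of_mem hαmem, hcard]
    rfl
  have hm0ne : m0 ≠ 0 := by intro h; rw [h] at hm0card; simp at hm0card
  obtain ⟨γ, hγm0⟩ := Multiset.exists_mem_of_ne_zero hm0ne
  have hγ1 : γ ≠ -α ∧ γ ∈ (p.map A).roots.erase α := (hnd1.mem_erase_iff).mp hγm0
  have hγ2 : γ ≠ α ∧ γ ∈ (p.map A).roots := (hnd.mem_erase_iff).mp hγ1.2
  have hγ4 : γ ^ 4 + A a * γ ^ 2 + A b = 0 := (hmem γ).mp hγ2.2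
  have hsqne : α ^ 2 - γ ^ 2 ≠ 0 := by
    intro h
    have h2 : (α - γ) * (α + γ) = 0 := by linear_combination h
    rcases mul_eq_zero.mp h2 with h' | h'
    · exact hγ2.1 (by linear_combination -h')
    · exact hγ1.1 (by linear_combination h')
  have hsum : α ^ 2 + γ ^ 2 + A a = 0 := by
    have h5 : (α ^ 2 - γ ^ 2) * (α ^ 2 + γ ^ 2 + A a) = 0 := by
      linear_combination hα4 - hγ4
    rcases mul_eq_zero.mp h5 with h' | h'
    · exact absurd h' hsqne
    · exact h'
  have hprod : (α * γ) ^ 2 = A b := by linear_combination α ^ 2 * hsum - hα4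
  set s : L := α * γ with hs
  have hαaev : aeval α p = 0 := by rw [haev]; exact hα4
  have hαint : IsIntegral F α := ⟨p, pmonic, hαaev⟩
  have hmin : minpoly F α = p := (minpoly.eq_of_irreducible_of_monic hirr hαaev pmonic).symm
  set K : IntermediateField F L := F⟮α⟯ with hK
  haveI : FiniteDimensional F K := IntermediateField.adjoin.finiteDimensional hαint
  have hfK : Module.finrank F K = 4 := by
    rw [hK, IntermediateField.adjoin.finrank hαint, hmin, pdeg]
  -- the quadratic X² - b over K
  set Ab : K := algebraMap F K b with hAb
  set q : Polynomial K := X ^ 2 - C Ab with hq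
  have qmonic : q.Monic := by rw [hq]; monicity!
  have qdeg : q.natDegree = 2 := by rw [hq]; compute_degree!
  have hKb : ∀ t : L, t ∈ K → t ^ 2 = A b → False := fun t htm ht =>
    key_no_sqrt a b hb hb' hirr (by rw [haev]; exact hα4) htm ht
  have hsq : aeval s q = 0 := by
    rw [hq]
    simp only [map_sub, map_pow, aeval_X, aeval_C]
    rw [hAb, ← IsScalarTower.algebraMap_apply F K L b, ← hA]
    linear_combination hprod
  have qroots : q.roots = 0 := by
    by_contra h
    obtain ⟨r, hr⟩ := Multiset.exists_mem_of_ne_zero h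
    have hqne : q ≠ 0 := qmonic.ne_zero
    rw [mem_roots hqne, IsRoot.def, hq] at hr
    simp only [eval_sub, eval_pow, eval_X, eval_C] at hr
    have hr2 : r ^ 2 = Ab := by linear_combination hr
    apply hKb (r : L) r.2
    have h9 := congrArg (algebraMap K L) hr2
    rw [map_pow, hAb, ← IsScalarTower.algebraMap_apply F K L b] at h9
    exact_mod_cast h9
  have qirr : Irreducible q :=
    (qmonic.irreducible_iff_roots_eq_zero_of_degree_le_three
      (by rw [qdeg]) (by rw [qdeg]; norm_num)).mpr qroots
  have hsint : IsIntegral K s := ⟨q, qmonic, hsq⟩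
  have hminq : minpoly K s = q := (minpoly.eq_of_irreducible_of_monic qirr hsq qmonic).symm
  have hfKs : Module.finrank K K⟮s⟯ = 2 := by
    rw [IntermediateField.adjoin.finrank hsint, hminq, qdeg]
  -- K⟮s⟯ = ⊤
  have hroots_mem : ∀ r : L, r ∈ (p.map A).roots → r ∈ K⟮s⟯ := by
    intro r hrmem
    have hr4 : r ^ 4 + A a * r ^ 2 + A b = 0 := (hmem r).mp hrmem
    have hαK : α ∈ K⟮s⟯ := by
      have : α ∈ K := IntermediateField.mem_adjoin_simple_self F α
      exact IntermediateField.algebraMap_mem K⟮s⟯ ⟨α, this⟩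
    have hsK : s ∈ K⟮s⟯ := IntermediateField.mem_adjoin_simple_self K s
    have hγK : γ ∈ K⟮s⟯ := by
      have : γ = s * α⁻¹ := by rw [hs, mul_comm α γ, mul_assoc, mul_inv_cancel₀ hα0, mul_one]
      rw [this]
      exact mul_mem hsK (inv_mem hαK)
    have h6 : (r ^ 2 - α ^ 2) * (r ^ 2 - γ ^ 2) = 0 := by
      linear_combination hr4 - r ^ 2 * hsum + hprod
    rcases mul_eq_zero.mp h6 with h7 | h7
    · rcases mul_eq_zero.mp (show (r - α) * (r + α) = 0 by linear_combination h7) with h8 | h8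
      · rw [show r = α by linear_combination h8]; exact hαK
      · rw [show r = -α by linear_combination h8]; exact neg_mem hαK
    · rcases mul_eq_zero.mp (show (r - γ) * (r + γ) = 0 by linear_combination h7) with h8 | h8
      · rw [show r = γ by linear_combination h8]; exact hγK
      · rw [show r = -γ by linear_combination h8]; exact neg_mem hγK
  have htop : K⟮s⟯ = (⊤ : IntermediateField K L) := by
    rw [eq_top_iff]
    intro x _
    have hadj : Algebra.adjoin F (p.rootSet L) = ⊤ := Polynomial.SplittingField.adjoin_rootSet p
    have hsub : Algebra.adjoin F (p.rootSet L) ≤ (K⟮s⟯.restrictScalars F).toSubalgebra := by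
      apply Algebra.adjoin_le
      intro r hr
      have : r ∈ (p.map A).roots := by
        rw [mem_rootSet] at hr
        rw [hmem, ← haev]
        exact hr.2
      exact hroots_mem r this
    have : x ∈ (K⟮s⟯.restrictScalars F).toSubalgebra := hsub (hadj ▸ Algebra.mem_top)
    exact this
  have hfKL : Module.finrank K L = 2 := by
    rw [← IntermediateField.finrank_top' (F := K) (E := L), ← htop, hfKs]
  have hfrank : Module.finrank F L = 8 := by
    rw [← Module.finrank_mul_finrank F K L, hfK, hfKL]
  haveI : Fact ((p.map A).Splits) := ⟨hsplits⟩
  have hcardGal : Nat.card p.Gal = 8 := by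
    rw [Polynomial.Gal.card_of_separable hsep]
    exact hfrank
  have hcardRS : Fintype.card (p.rootSet L) = 4 := by
    rw [card_rootSet_eq_natDegree hsep hsplits, pdeg]
  let e : p.rootSet L ≃ Fin 4 := Fintype.equivFinOfCardEq hcardRS
  let f := (permMulEquiv e).toMonoidHom.comp (Polynomial.Gal.galActionHom p L)
  have hfinj : Function.Injective f :=
    (permMulEquiv e).injective.comp (Polynomial.Gal.galActionHom_injective p L)
  let e2 := MonoidHom.ofInjective hfinj
  have hHcard : Nat.card f.range = 8 := by
    rw [← Nat.card_congr e2.toEquiv]; exact hcardGal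
  obtain ⟨iso⟩ := perm4_card8 f.range hHcard
  exact ⟨e2.trans iso⟩
end

section
/- Let K be a real or imaginary quadratic field with discriminant Δ_K ∉ {−3, −4}, let γ = a + b√Δ_K ∈ K with a, b ∈ ℚ, γ ∉ ℚ, γ not a square in K, and Norm_{K/ℚ}(γ)·Δ_K not a square in ℚ. If N := Norm_{K/ℚ}(γ) is not a square in ℚ, then for every positive integer n, √γ ∉ K(ζ_n). -/
open Polynomial IntermediateField

private lemma rat_sq_int {q : ℚ} {m : ℤ} (h : q ^ 2 = (m : ℚ)) : IsSquare m := by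
  have hint : IsIntegral ℤ q := by
    refine ⟨X ^ 2 - C m, monic_X_pow_sub_C m two_ne_zero, ?_⟩
    rw [← Polynomial.aeval_def, map_sub, aeval_X_pow, aeval_C]
    simp [h]
  obtain ⟨z, hz⟩ := IsIntegrallyClosed.isIntegral_iff.mp hint
  have hz' : (z : ℚ) = q := by exact_mod_cast hz
  refine ⟨z, ?_⟩
  have : (z : ℚ) * z = (m : ℚ) := by rw [hz']; rw [← h]; ring
  exact_mod_cast this.symm

private lemma mem_adjoin_sq {s : ℂ} {d : ℚ} (hs : s ^ 2 = (d : ℂ)) {x : ℂ}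
    (hx : x ∈ IntermediateField.adjoin ℚ {s}) : ∃ u v : ℚ, x = (u : ℂ) + (v : ℂ) * s := by
  let S : Subalgebra ℚ ℂ :=
  { carrier := {x | ∃ u v : ℚ, x = (u : ℂ) + (v : ℂ) * s}
    mul_mem' := by
      rintro x y ⟨u, v, rfl⟩ ⟨u', v', rfl⟩
      refine ⟨u * u' + v * v' * d, u * v' + v * u', ?_⟩
      push_cast
      linear_combination ((v : ℂ) * (v' : ℂ)) * hs
    add_mem' := by
      rintro x y ⟨u, v, rfl⟩ ⟨u', v', rfl⟩
      exact ⟨u + u', v + v', by push_cast; ring⟩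
    one_mem' := ⟨1, 0, by norm_num⟩
    zero_mem' := ⟨0, 0, by norm_num⟩
    algebraMap_mem' := fun q => ⟨q, 0, by simp⟩ }
  have hsint : IsIntegral ℚ s := by
    refine ⟨X ^ 2 - C d, monic_X_pow_sub_C d two_ne_zero, ?_⟩
    rw [← Polynomial.aeval_def, map_sub, aeval_X_pow, aeval_C, hs]
    simp
  have h1 : (IntermediateField.adjoin ℚ {s}).toSubalgebra = Algebra.adjoin ℚ {s} :=
    IntermediateField.adjoin_toSubalgebra_of_isAlgebraic
      (fun x hx => by rw [Set.mem_singleton_iff] at hx; exact hx ▸ hsint.isAlgebraic)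
  have h2 : Algebra.adjoin ℚ ({s} : Set ℂ) ≤ S :=
    Algebra.adjoin_le (by rintro y rfl; exact ⟨0, 1, by norm_num⟩)
  have : x ∈ Algebra.adjoin ℚ ({s} : Set ℂ) := by
    rw [← h1]; exact hx
  exact h2 this

set_option maxHeartbeats 1000000 in
/-- Let `K = ℚ(√Δ)` be a quadratic field with fundamental discriminant `Δ ∉ {-3, -4}`, and let
`γ = a + b√Δ ∈ K` with `γ ∉ ℚ`, `γ` not a square in `K`, and `Norm(γ)·Δ` not a square in `ℚ`.
If `N = Norm(γ) = a² - b²Δ` is not a square in `ℚ`, then `√γ ∉ K(ζ_n)` for every `n ≥ 1`. -/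
theorem sqrt_notMem_of_norm_not_square
    (Δ : ℤ) (hΔns : ¬ IsSquare Δ) (hΔ3 : Δ ≠ -3) (hΔ4 : Δ ≠ -4)
    (hΔfund : (Δ % 4 = 1 ∧ Squarefree Δ) ∨
      ∃ d : ℤ, Δ = 4 * d ∧ Squarefree d ∧ (d % 4 = 2 ∨ d % 4 = 3))
    (sΔ : ℂ) (hsΔ : sΔ ^ 2 = (Δ : ℂ))
    (a b : ℚ) (γ : ℂ) (hγ : γ = (a : ℂ) + (b : ℂ) * sΔ)
    (hγQ : ¬ ∃ q : ℚ, γ = (q : ℂ))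
    (hγsq : ¬ ∃ δ ∈ IntermediateField.adjoin ℚ {sΔ}, δ ^ 2 = γ)
    (hNΔ : ¬ IsSquare ((a ^ 2 - b ^ 2 * (Δ : ℚ)) * (Δ : ℚ)))
    (hN : ¬ IsSquare (a ^ 2 - b ^ 2 * (Δ : ℚ))) :
    ∀ n : ℕ, 0 < n → ∀ ζ : ℂ, IsPrimitiveRoot ζ n →
      ∀ g : ℂ, g ^ 2 = γ → g ∉ IntermediateField.adjoin ℚ {sΔ, ζ} := by
  intro n hn ζ hζ g hg2 hgF
  haveI : NeZero n := ⟨hn.ne'⟩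
  set F : IntermediateField ℚ ℂ := IntermediateField.adjoin ℚ {sΔ, ζ} with hF
  -- basic facts
  have hs_irr : ∀ q : ℚ, q ^ 2 ≠ ((Δ : ℚ)) := fun q hq => hΔns (rat_sq_int hq)
  have hsint : IsIntegral ℚ sΔ := by
    refine ⟨X ^ 2 - C ((Δ : ℚ)), monic_X_pow_sub_C _ two_ne_zero, ?_⟩
    rw [← Polynomial.aeval_def, map_sub, aeval_X_pow, aeval_C, hsΔ]
    simp
  have hζint : IsIntegral ℚ ζ := by
    refine ⟨X ^ n - C 1, monic_X_pow_sub_C _ hn.ne', ?_⟩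
    rw [← Polynomial.aeval_def, map_sub, aeval_X_pow, aeval_C, hζ.pow_eq_one]
    simp
  have hsmem : sΔ ∈ F := IntermediateField.subset_adjoin _ _ (by left; rfl)
  have hζmem : ζ ∈ F := IntermediateField.subset_adjoin _ _ (by right; rfl)
  have hQmem : ∀ q : ℚ, (q : ℂ) ∈ F := fun q => by
    have := F.algebraMap_mem q
    rwa [show algebraMap ℚ ℂ q = (q : ℂ) from eq_ratCast _ q] at this
  -- finite dimensionality
  haveI : Finite ({sΔ, ζ} : Set ℂ) := ((Set.finite_singleton ζ).insert sΔ).to_subtype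
  haveI : FiniteDimensional ℚ F :=
    IntermediateField.finiteDimensional_adjoin (fun x hx => by
      rcases hx with rfl | hx
      · exact hsint
      · rw [Set.mem_singleton_iff] at hx; exact hx ▸ hζint)
  -- Galois
  set p : ℚ[X] := (X ^ 2 - C ((Δ : ℚ))) * (X ^ n - C 1) with hp
  have hpmonic : p.Monic := (monic_X_pow_sub_C _ two_ne_zero).mul (monic_X_pow_sub_C _ hn.ne')
  have hproots : ∀ x : ℂ, (Polynomial.aeval x) p = 0 ↔ (x ^ 2 = (Δ : ℂ) ∨ x ^ n = 1) := by
    intro x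
    rw [hp, map_mul, map_sub, map_sub, aeval_X_pow, aeval_X_pow, aeval_C, aeval_C,
      mul_eq_zero, sub_eq_zero, sub_eq_zero]
    push_cast
    simp
  have hFeq : F = IntermediateField.adjoin ℚ (p.rootSet ℂ) := by
    apply le_antisymm
    · rw [hF, IntermediateField.adjoin_le_iff]
      rintro x (rfl | hx)
      · exact IntermediateField.subset_adjoin _ _
          (by rw [Polynomial.mem_rootSet]; exact ⟨hpmonic.ne_zero, (hproots _).mpr (Or.inl hsΔ)⟩)
      · rw [Set.mem_singleton_iff] at hx; subst hx
        exact IntermediateField.subset_adjoin _ _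
          (by rw [Polynomial.mem_rootSet]
              exact ⟨hpmonic.ne_zero, (hproots _).mpr (Or.inr hζ.pow_eq_one)⟩)
    · rw [IntermediateField.adjoin_le_iff]
      intro x hx
      rw [Polynomial.mem_rootSet] at hx
      rcases (hproots x).mp hx.2 with h | h
      · have : x * x = sΔ * sΔ := by rw [← pow_two, ← pow_two, h, hsΔ]
        rcases mul_self_eq_mul_self_iff.mp this with rfl | rfl
        · exact hsmem
        · exact neg_mem hsmem
      · obtain ⟨i, _, rfl⟩ := hζ.eq_pow_of_pow_eq_one h
        exact pow_mem hζmem i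
  have hsplits : (p.map (algebraMap ℚ ℂ)).Splits := IsAlgClosed.splits _
  haveI hspl : Polynomial.IsSplittingField ℚ F p := by
    rw [hFeq]
    exact IntermediateField.adjoin_rootSet_isSplittingField hsplits
  haveI : Normal ℚ F := Normal.of_isSplittingField p
  haveI : IsGalois ℚ F := ⟨⟩
  -- elements of F
  set sF : F := ⟨sΔ, hsmem⟩ with hsF
  set ζF : F := ⟨ζ, hζmem⟩ with hζF
  have hγmem : γ ∈ F := by
    rw [hγ]; exact add_mem (hQmem a) (mul_mem (hQmem b) hsmem)
  set γF : F := ⟨γ, hγmem⟩ with hγF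
  set gF : F := ⟨g, hgF⟩ with hgFdef
  have hcoeQ : ∀ q : ℚ, ((algebraMap ℚ F q : F) : ℂ) = (q : ℂ) := fun q => by
    have : (F.val.toRingHom.comp (algebraMap ℚ F)) q = (q : ℂ) := eq_ratCast _ q
    exact this
  have hsF2 : sF ^ 2 = algebraMap ℚ F ((Δ : ℚ)) := by
    apply Subtype.ext
    push_cast
    rw [hcoeQ, hsΔ]; push_cast; ring
  have hζFn : ζF ^ n = 1 := by
    apply Subtype.ext
    push_cast
    exact hζ.pow_eq_one
  have hgF2 : gF ^ 2 = γF := by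
    apply Subtype.ext
    push_cast
    exact hg2
  have hγFeq : γF = algebraMap ℚ F a + algebraMap ℚ F b * sF := by
    apply Subtype.ext
    push_cast
    rw [hcoeQ, hcoeQ]
    exact hγ
  -- action of automorphisms on generators
  have hsign : ∀ f : F ≃ₐ[ℚ] F, f sF = sF ∨ f sF = -sF := by
    intro f
    have h2 : f sF * f sF = sF * sF := by
      rw [← map_mul, ← pow_two, hsF2, AlgEquiv.commutes, ← hsF2, pow_two]
    exact mul_self_eq_mul_self_iff.mp h2
  have hroot : ∀ f : F ≃ₐ[ℚ] F, ∃ i : ℕ, f ζF = ζF ^ i := by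
    intro f
    have h1 : ((f ζF : F) : ℂ) ^ n = 1 := by
      have : (f ζF) ^ n = 1 := by rw [← map_pow, hζFn, map_one]
      have := congrArg (Subtype.val) this
      push_cast at this
      exact this
    obtain ⟨i, _, hi⟩ := hζ.eq_pow_of_pow_eq_one h1
    exact ⟨i, Subtype.ext (by push_cast; exact hi.symm)⟩
  -- adjoin top
  have hadjtop : Algebra.adjoin ℚ ({sF, ζF} : Set F) = ⊤ := by
    have hIF : IntermediateField.adjoin ℚ ({sF, ζF} : Set F) = ⊤ := by
      apply IntermediateField.lift_injective F
      refine (IntermediateField.lift_adjoin (F := ℚ) (K := F) _).trans ((?_ : _ = F).trans (IntermediateField.lift_top (F := ℚ) (K := F)).symm)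
      rw [Set.image_insert_eq, Set.image_singleton]
    have halg : ∀ x ∈ ({sF, ζF} : Set F), IsAlgebraic ℚ x :=
      fun x _ => (IsIntegral.of_finite ℚ x).isAlgebraic
    have := IntermediateField.adjoin_toSubalgebra_of_isAlgebraic halg
    rw [hIF] at this
    rw [← this]
    rfl
  -- commutativity
  have hcomm : ∀ (f t : F ≃ₐ[ℚ] F) (x : F), f (t x) = t (f x) := by
    intro f t x
    have hle : Algebra.adjoin ℚ ({sF, ζF} : Set F) ≤
        AlgHom.equalizer (f.toAlgHom.comp t.toAlgHom) (t.toAlgHom.comp f.toAlgHom) := by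
      apply Algebra.adjoin_le
      rintro y (rfl | hy)
      · show f (t sF) = t (f sF)
        rcases hsign f with hf | hf <;> rcases hsign t with ht | ht <;>
          simp only [ht, hf, map_neg, neg_neg]
      · rw [Set.mem_singleton_iff] at hy; subst hy
        show f (t ζF) = t (f ζF)
        obtain ⟨i, hi⟩ := hroot f
        obtain ⟨j, hj⟩ := hroot t
        rw [hi, hj, map_pow, map_pow, hi, hj, ← pow_mul, ← pow_mul, Nat.mul_comm]
    have hx : x ∈ AlgHom.equalizer (f.toAlgHom.comp t.toAlgHom) (t.toAlgHom.comp f.toAlgHom) :=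
      hle (hadjtop ▸ Algebra.mem_top)
    exact hx
  -- minimal polynomial of sF
  have hmin : minpoly ℚ sF = X ^ 2 - C ((Δ : ℚ)) := by
    refine (minpoly.eq_of_irreducible_of_monic (x := sF)
      (X_pow_sub_C_irreducible_of_prime Nat.prime_two (fun b hb => hs_irr b hb)) ?_
      (monic_X_pow_sub_C _ two_ne_zero)).symm
    rw [map_sub, aeval_X_pow, aeval_C, hsF2, sub_self]
  -- the automorphism σ with σ sF = -sF
  have h_ev : (Polynomial.aeval (-sF)) (minpoly ℚ sF) = 0 := by
    rw [hmin, map_sub, aeval_X_pow, aeval_C, neg_pow, hsF2]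
    ring
  obtain ⟨σ, hσ⟩ := minpoly.exists_algEquiv_of_root' (IsIntegral.of_finite ℚ sF).isAlgebraic h_ev
  -- h = gF * σ gF
  set N : ℚ := a ^ 2 - b ^ 2 * (Δ : ℚ) with hNdef
  have hσγ : σ γF = algebraMap ℚ F a - algebraMap ℚ F b * sF := by
    rw [hγFeq, map_add, map_mul, AlgEquiv.commutes, AlgEquiv.commutes, hσ]
    ring
  have hh2 : (gF * σ gF) ^ 2 = algebraMap ℚ F N := by
    have h1 : (σ gF) ^ 2 = σ γF := by rw [← map_pow, hgF2]
    have h2 : algebraMap ℚ F N =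
        (algebraMap ℚ F a) ^ 2 - (algebraMap ℚ F b) ^ 2 * algebraMap ℚ F ((Δ : ℚ)) := by
      rw [hNdef, map_sub, map_mul, map_pow, map_pow]
    rw [mul_pow, hgF2, h1, hσγ, hγFeq, h2, ← hsF2]
    ring
  -- fixed by Gal(F/K')
  set K' : IntermediateField ℚ F := IntermediateField.adjoin ℚ {sF} with hK'def
  have hsFK' : sF ∈ K' := IntermediateField.subset_adjoin _ _ rfl
  have hfix : gF * σ gF ∈ IntermediateField.fixedField (IntermediateField.fixingSubgroup K') := by
    intro τ
    have hτs : τ.1 sF = sF := by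
      have := (IntermediateField.mem_fixingSubgroup_iff K' τ.1).mp τ.2
      exact this sF hsFK'
    have hτγ : τ.1 γF = γF := by
      rw [hγFeq, map_add, map_mul, AlgEquiv.commutes, AlgEquiv.commutes, hτs]
    have hτg : τ.1 gF = gF ∨ τ.1 gF = -gF := by
      have h2 : τ.1 gF * τ.1 gF = gF * gF := by
        rw [← map_mul, ← pow_two, hgF2, hτγ, ← hgF2, pow_two]
      exact mul_self_eq_mul_self_iff.mp h2
    show τ.1 (gF * σ gF) = gF * σ gF
    rw [map_mul]
    have hcs : τ.1 (σ gF) = σ (τ.1 gF) := hcomm τ.1 σ gF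
    rcases hτg with h | h
    · rw [hcs, h]
    · rw [hcs, h, map_neg]
      ring
  have hK' : gF * σ gF ∈ K' := by
    rw [← IsGalois.fixedField_fixingSubgroup K']
    exact hfix
  -- push down to ℂ
  have hCmem : ((gF * σ gF : F) : ℂ) ∈ IntermediateField.adjoin ℚ {sΔ} := by
    have h1 : IntermediateField.lift K' = IntermediateField.adjoin ℚ {sΔ} := by
      rw [hK'def]; exact IntermediateField.lift_adjoin_simple (F := ℚ) (K := F) (α := sF)
    rw [← h1]
    exact (IntermediateField.mem_lift (gF * σ gF)).mpr hK'
  obtain ⟨u, v, huv⟩ := mem_adjoin_sq (d := (Δ : ℚ)) (by push_cast; exact hsΔ) hCmem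
  have hNc : ((u : ℂ) + (v : ℂ) * sΔ) ^ 2 = ((N : ℚ) : ℂ) := by
    rw [← huv]
    have := congrArg (Subtype.val) hh2
    push_cast at this
    rw [hcoeQ] at this
    exact this
  -- final computation
  push_cast at hNc
  by_cases hv : v = 0
  · subst hv
    have : (u : ℂ) ^ 2 = ((N : ℚ) : ℂ) := by
      push_cast
      linear_combination hNc
    have hu2 : u ^ 2 = N := by exact_mod_cast this
    exact hN ⟨u, by rw [← hu2]; ring⟩
  · by_cases hu : u = 0
    · subst hu
      have : ((v ^ 2 * (Δ : ℚ) : ℚ) : ℂ) = ((N : ℚ) : ℂ) := by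
        push_cast
        linear_combination hNc - (v : ℂ) ^ 2 * hsΔ
      have hv2 : v ^ 2 * (Δ : ℚ) = N := by exact_mod_cast this
      refine hNΔ ⟨v * (Δ : ℚ), ?_⟩
      rw [← hv2]; ring
    · set q : ℚ := (N - u ^ 2 - v ^ 2 * (Δ : ℚ)) / (2 * u * v) with hqdef
      have hq : (q : ℂ) = sΔ := by
        rw [hqdef]
        push_cast
        rw [div_eq_iff (by
          exact mul_ne_zero (mul_ne_zero two_ne_zero (by exact_mod_cast hu)) (by exact_mod_cast hv))]
        linear_combination -hNc + (v : ℂ) ^ 2 * hsΔ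
      have : (q : ℂ) ^ 2 = ((Δ : ℚ) : ℂ) := by rw [hq]; push_cast; exact hsΔ
      have hq2 : q ^ 2 = ((Δ : ℚ)) := by exact_mod_cast this
      exact hΔns (rat_sq_int hq2)
end

section
/- Let K be a quadratic field with discriminant Δ_K ∉ {−3, −4}, and let γ = a + b√Δ_K ∈ K with a, b ∈ ℚ, γ ∉ ℚ, γ not a square in K, and Norm_{K/ℚ}(γ)·Δ_K not a square in ℚ. Suppose N := Norm_{K/ℚ}(γ) = s² for some s ∈ ℚ. Set c := (a − s)/2 and d := c/Δ_K. Then for every positive integer n: √γ ∈ K(ζ_n) if and only if √c ∈ ℚ(ζ_n) or √d ∈ ℚ(ζ_n). -/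
/-!
Write `c = (a - s)/2` and `r = √Δ`. If `g² = γ` with `g ≠ 0`, then `(g - s/g)/2` squares to `c`;
conversely, if `z² = c`, then `z + b r/(2z)` squares to `γ`. So `√γ ∈ K(ζₙ) = ℚ(ζₙ)(r)` iff `√c ∈ ℚ(ζₙ)(r)`.
Finally, writing a square root of the rational number `c` in `ℚ(ζₙ)(r)` as `u + v r` with `u, v ∈ ℚ(ζₙ)`,
the cross term `2uv r` must vanish unless `r ∈ ℚ(ζₙ)`, so `√c` is `u ∈ ℚ(ζₙ)` or `v r` with `v² = c/Δ = d`.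
-/

theorem mem_of_sq_eq_sq {E S : Type*} [CommRing E] [NoZeroDivisors E] [SetLike S E]
    [NegMemClass S E] {L : S} {x y : E} (hy : y ∈ L) (h : x ^ 2 = y ^ 2) : x ∈ L := by
  rcases sq_eq_sq_iff_eq_or_eq_neg.1 h with rfl | rfl
  · exact hy
  · exact neg_mem hy

section SqrtOfNormSquare

variable {E : Type*} [Field E] [NeZero (2 : E)] {a b r s : E}

theorem sq_half_sub_div_eq {g : E} (hg : g ^ 2 = a + b * r) (hN : a ^ 2 - b ^ 2 * r ^ 2 = s ^ 2)
    (hg0 : g ≠ 0) : ((g - s / g) / 2) ^ 2 = (a - s) / 2 := by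
  field_simp
  linear_combination (g ^ 2 - a + b * r) * hg - hN

theorem sq_add_div_eq {z : E} (hN : a ^ 2 - b ^ 2 * r ^ 2 = s ^ 2) (hz : z ^ 2 = (a - s) / 2)
    (hz0 : z ≠ 0) : (z + b * r / (2 * z)) ^ 2 = a + b * r := by
  have h2 : (2 : E) ≠ 0 := two_ne_zero
  have hz' : 2 * z ^ 2 = a - s := by rw [hz]; field_simp
  field_simp
  linear_combination (2 * z ^ 2 - a - s) * hz' - hN

end SqrtOfNormSquare

namespace IntermediateField

variable {K E : Type*} [Field K] [Field E] [Algebra K E]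

theorem exists_inv_eq_add_mul {F : IntermediateField K E} {r u v : E} (hr2 : r ^ 2 ∈ F)
    (hr : r ∉ F) (hu : u ∈ F) (hv : v ∈ F) : ∃ u' ∈ F, ∃ v' ∈ F, (u + v * r)⁻¹ = u' + v' * r := by
  by_cases hv0 : v = 0
  · exact ⟨u⁻¹, inv_mem hu, 0, zero_mem F, by simp [hv0]⟩
  set n := u ^ 2 - v ^ 2 * r ^ 2
  have hnF : n ∈ F := sub_mem (pow_mem hu 2) (mul_mem (pow_mem hv 2) hr2)
  -- `n = 0` would make `r = ± u/v` lie in `F`.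
  have hn : n ≠ 0 := fun hn ↦ hr <| mem_of_sq_eq_sq (div_mem hu hv) (by
    field_simp
    linear_combination -hn)
  refine ⟨u / n, div_mem hu hnF, -v / n, div_mem (neg_mem hv) hnF, inv_eq_of_mul_eq_one_right ?_⟩
  field_simp
  ring

theorem exists_eq_add_mul_of_mem_adjoin_insert {S : Set E} {r x : E} (hr2 : r ^ 2 ∈ adjoin K S)
    (hx : x ∈ adjoin K (insert r S)) : ∃ u ∈ adjoin K S, ∃ v ∈ adjoin K S, x = u + v * r := by
  set F := adjoin K S
  by_cases hr : r ∈ F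
  · have hle : adjoin K (insert r S) ≤ F :=
      adjoin_le_iff.2 (Set.insert_subset hr (subset_adjoin K S))
    exact ⟨x, hle hx, 0, zero_mem F, by ring⟩
  induction hx using adjoin_induction with
  | mem x hx =>
    rcases hx with rfl | hx
    · exact ⟨0, zero_mem F, 1, one_mem F, by ring⟩
    · exact ⟨x, subset_adjoin K S hx, 0, zero_mem F, by ring⟩
  | algebraMap q => exact ⟨algebraMap K E q, algebraMap_mem F q, 0, zero_mem F, by ring⟩
  | add x y _ _ ihx ihy =>
    obtain ⟨u₁, hu₁, v₁, hv₁, rfl⟩ := ihx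
    obtain ⟨u₂, hu₂, v₂, hv₂, rfl⟩ := ihy
    exact ⟨u₁ + u₂, add_mem hu₁ hu₂, v₁ + v₂, add_mem hv₁ hv₂, by ring⟩
  | inv x _ ih =>
    obtain ⟨u, hu, v, hv, rfl⟩ := ih
    exact exists_inv_eq_add_mul hr2 hr hu hv
  | mul x y _ _ ihx ihy =>
    obtain ⟨u₁, hu₁, v₁, hv₁, rfl⟩ := ihx
    obtain ⟨u₂, hu₂, v₂, hv₂, rfl⟩ := ihy
    exact ⟨u₁ * u₂ + v₁ * v₂ * r ^ 2, add_mem (mul_mem hu₁ hu₂) (mul_mem (mul_mem hv₁ hv₂) hr2),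
      u₁ * v₂ + v₁ * u₂, add_mem (mul_mem hu₁ hv₂) (mul_mem hv₁ hu₂), by ring⟩

theorem exists_sq_eq_or_mul_sq_eq_of_mem_adjoin_insert [NeZero (2 : E)] {S : Set E} {r y c : E}
    (hr2 : r ^ 2 ∈ adjoin K S) (hy : y ∈ adjoin K (insert r S)) (hc : c ∈ adjoin K S)
    (hyc : y ^ 2 = c) :
    (∃ u ∈ adjoin K S, u ^ 2 = c) ∨ ∃ v ∈ adjoin K S, v ^ 2 * r ^ 2 = c := by
  set F := adjoin K S
  obtain ⟨u, hu, v, hv, rfl⟩ := exists_eq_add_mul_of_mem_adjoin_insert hr2 hy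
  by_cases hr : r ∈ F
  · exact .inl ⟨u + v * r, add_mem hu (mul_mem hv hr), hyc⟩
  have huv : u * v = 0 := by
    by_contra huv
    refine hr ?_
    have hr_eq : r = (c - u ^ 2 - v ^ 2 * r ^ 2) / (2 * (u * v)) := by
      rw [← hyc, eq_div_iff (mul_ne_zero two_ne_zero huv)]
      ring
    rw [hr_eq]
    exact div_mem (sub_mem (sub_mem hc (pow_mem hu 2)) (mul_mem (pow_mem hv 2) hr2))
      (mul_mem (ofNat_mem F 2) (mul_mem hu hv))
  rcases mul_eq_zero.1 huv with rfl | rfl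
  · exact .inr ⟨v, hv, by rw [← hyc]; ring⟩
  · exact .inl ⟨u, hu, by rw [← hyc]; ring⟩

theorem mem_adjoin_insert_iff_of_sq_eq_add_mul [NeZero (2 : E)] {S : Set E} {a b r s g : E}
    (ha : a ∈ adjoin K S) (hb : b ∈ adjoin K S) (hs : s ∈ adjoin K S) (hr2 : r ^ 2 ∈ adjoin K S)
    (hN : a ^ 2 - b ^ 2 * r ^ 2 = s ^ 2) (has : a - s ≠ 0) (hg : g ^ 2 = a + b * r) (hg0 : g ≠ 0) :
    g ∈ adjoin K (insert r S) ↔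
      (∃ u ∈ adjoin K S, u ^ 2 = (a - s) / 2) ∨ ∃ v ∈ adjoin K S, v ^ 2 * r ^ 2 = (a - s) / 2 := by
  have hFL : adjoin K S ≤ adjoin K (insert r S) := adjoin.mono K _ _ (Set.subset_insert r S)
  have hrL : r ∈ adjoin K (insert r S) := subset_adjoin K _ (Set.mem_insert r S)
  have of_sq_eq : ∀ z ∈ adjoin K (insert r S), z ^ 2 = (a - s) / 2 → g ∈ adjoin K (insert r S) := by
    intro z hz hzc
    have hz0 : z ≠ 0 := by
      rintro rfl
      exact has (by simpa [eq_comm (a := (0 : E)), two_ne_zero] using hzc)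
    exact mem_of_sq_eq_sq
      (add_mem hz (div_mem (mul_mem (hFL hb) hrL) (mul_mem (ofNat_mem _ 2) hz)))
      (hg.trans (sq_add_div_eq hN hzc hz0).symm)
  constructor
  · exact fun hgL ↦ exists_sq_eq_or_mul_sq_eq_of_mem_adjoin_insert hr2
      (div_mem (sub_mem hgL (div_mem (hFL hs) hgL)) (ofNat_mem _ 2))
      (div_mem (sub_mem ha hs) (ofNat_mem _ 2)) (sq_half_sub_div_eq hg hN hg0)
  · rintro (⟨u, hu, huc⟩ | ⟨v, hv, hvc⟩)
    · exact of_sq_eq u (hFL hu) huc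
    · exact of_sq_eq (v * r) (mul_mem (hFL hv) hrL) (by rw [mul_pow, hvc])

end IntermediateField

theorem sqrt_mem_iff_of_norm_square_general
    (Δ : ℤ) (hΔns : ¬ IsSquare Δ)
    (sΔ : ℂ) (hsΔ : sΔ ^ 2 = (Δ : ℂ))
    (a b : ℚ) (γ : ℂ) (hγ : γ = (a : ℂ) + (b : ℂ) * sΔ)
    (hγQ : ¬ ∃ q : ℚ, γ = (q : ℂ))
    (s : ℚ) (hN : a ^ 2 - b ^ 2 * (Δ : ℚ) = s ^ 2)
    (c d : ℚ) (hc : c = (a - s) / 2) (hd : d = c / (Δ : ℚ)) :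
    ∀ n : ℕ, 0 < n → ∀ ζ : ℂ, IsPrimitiveRoot ζ n →
      ∀ g : ℂ, g ^ 2 = γ →
        (g ∈ IntermediateField.adjoin ℚ {sΔ, ζ} ↔
          (∃ y ∈ IntermediateField.adjoin ℚ {ζ}, y ^ 2 = (c : ℂ)) ∨
          (∃ y ∈ IntermediateField.adjoin ℚ {ζ}, y ^ 2 = (d : ℂ))) := by
  intro n _ ζ _ g hg
  have hΔ : (Δ : ℚ) ≠ 0 := by exact_mod_cast fun h ↦ hΔns ⟨0, h⟩
  have hb : b ≠ 0 := by rintro rfl; exact hγQ ⟨a, by simp [hγ]⟩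
  have has : a - s ≠ 0 := by
    intro has
    have : b ^ 2 * (Δ : ℚ) = 0 := by rw [sub_eq_zero.1 has] at hN; linarith
    simp [hb, hΔ] at this
  have hg0 : g ≠ 0 := by rintro rfl; exact hγQ ⟨0, by simpa using hg.symm⟩
  have hdc : (d : ℂ) = c / sΔ ^ 2 := by rw [hsΔ]; exact_mod_cast hd
  have hs2 : sΔ ^ 2 ≠ 0 := by rw [hsΔ]; exact_mod_cast hΔ
  have hcC : (c : ℂ) = (a - s) / 2 := by exact_mod_cast hc
  subst hγ
  rw [IntermediateField.mem_adjoin_insert_iff_of_sq_eq_add_mul (SubfieldClass.ratCast_mem _ a)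
    (SubfieldClass.ratCast_mem _ b) (SubfieldClass.ratCast_mem _ s)
    (hsΔ ▸ intCast_mem _ Δ) (by rw [hsΔ]; exact_mod_cast hN) (by exact_mod_cast has) hg hg0,
    hdc, ← hcC]
  simp only [eq_div_iff hs2]

/-- Let `K = ℚ(√Δ)` be a quadratic field with fundamental discriminant `Δ ∉ {-3, -4}`, and let
`γ = a + b√Δ ∈ K` with `γ ∉ ℚ`, `γ` not a square in `K`, and `Norm(γ)·Δ` not a square in `ℚ`.
Suppose `N := Norm(γ) = a² - b²Δ = s²` with `s ∈ ℚ`, and set `c := (a - s)/2`, `d := c/Δ`.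
Then for every `n ≥ 1`: `√γ ∈ K(ζ_n)` iff `√c ∈ ℚ(ζ_n)` or `√d ∈ ℚ(ζ_n)`. -/
theorem sqrt_mem_iff_of_norm_square
    (Δ : ℤ) (hΔns : ¬ IsSquare Δ) (hΔ3 : Δ ≠ -3) (hΔ4 : Δ ≠ -4)
    (hΔfund : (Δ % 4 = 1 ∧ Squarefree Δ) ∨
      ∃ d : ℤ, Δ = 4 * d ∧ Squarefree d ∧ (d % 4 = 2 ∨ d % 4 = 3))
    (sΔ : ℂ) (hsΔ : sΔ ^ 2 = (Δ : ℂ))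
    (a b : ℚ) (γ : ℂ) (hγ : γ = (a : ℂ) + (b : ℂ) * sΔ)
    (hγQ : ¬ ∃ q : ℚ, γ = (q : ℂ))
    (hγsq : ¬ ∃ δ ∈ IntermediateField.adjoin ℚ {sΔ}, δ ^ 2 = γ)
    (hNΔ : ¬ IsSquare ((a ^ 2 - b ^ 2 * (Δ : ℚ)) * (Δ : ℚ)))
    (s : ℚ) (hN : a ^ 2 - b ^ 2 * (Δ : ℚ) = s ^ 2)
    (c d : ℚ) (hc : c = (a - s) / 2) (hd : d = c / (Δ : ℚ)) :
    ∀ n : ℕ, 0 < n → ∀ ζ : ℂ, IsPrimitiveRoot ζ n →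
      ∀ g : ℂ, g ^ 2 = γ →
        (g ∈ IntermediateField.adjoin ℚ {sΔ, ζ} ↔
          (∃ y ∈ IntermediateField.adjoin ℚ {ζ}, y ^ 2 = (c : ℂ)) ∨
          (∃ y ∈ IntermediateField.adjoin ℚ {ζ}, y ^ 2 = (d : ℂ))) :=
  sqrt_mem_iff_of_norm_square_general Δ hΔns sΔ hsΔ a b γ hγ hγQ s hN c d hc hd
end

section
/- Let K = ℚ(√Δ) be a quadratic field and a ∈ ℚ a nonsquare rational. Then for every positive integer n, √a ∈ K(ζ_n) if and only if √a ∈ ℚ(ζ_n) or √(a/Δ) ∈ ℚ(ζ_n), where Δ is the discriminant of K. -/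
open Polynomial IntermediateField

/-- Every element of `F(s)` with `s² = d ∈ F` is of the form `u + v s`. -/
lemma quad_rep {F E : Type*} [Field F] [Field E] [Algebra F E] (s : E) (d : F)
    (hs : s ^ 2 = algebraMap F E d) {x : E} (hx : x ∈ IntermediateField.adjoin F {s}) :
    ∃ u v : F, x = algebraMap F E u + algebraMap F E v * s := by
  have hint : IsIntegral F s := by
    refine ⟨X ^ 2 - C d, monic_X_pow_sub_C d (by norm_num), ?_⟩
    simp [hs]
  have hx' : x ∈ Algebra.adjoin F {s} := by
    rw [← adjoin_simple_toSubalgebra_of_isAlgebraic hint.isAlgebraic]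
    exact hx
  rw [Algebra.adjoin_singleton_eq_range_aeval] at hx'
  obtain ⟨p, hp⟩ := hx'
  have hm : (X ^ 2 - C d : F[X]).Monic := monic_X_pow_sub_C d (by norm_num)
  set r := p %ₘ (X ^ 2 - C d) with hr
  have hdeg : r.degree ≤ 1 := by
    have := degree_modByMonic_lt p hm
    rw [degree_X_pow_sub_C (by norm_num)] at this
    exact Order.le_of_lt_succ (by exact_mod_cast this)
  have haev : aeval s r = x := by
    have := modByMonic_add_div p (X ^ 2 - C d)
    have h0 : aeval s (X ^ 2 - C d : F[X]) = 0 := by simp [hs]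
    calc aeval s r = aeval s (r + (X ^ 2 - C d) * (p /ₘ (X ^ 2 - C d))) := by
          rw [map_add, map_mul, h0, zero_mul, add_zero]
      _ = aeval s p := by rw [this]
      _ = x := hp
  refine ⟨r.coeff 0, r.coeff 1, ?_⟩
  rw [← haev]
  conv_lhs => rw [eq_X_add_C_of_degree_le_one hdeg]
  rw [map_add, map_mul, aeval_X, aeval_C, aeval_C]
  ring

/-- Let `K = ℚ(√Δ)` be a quadratic field with fundamental discriminant `Δ`, and let `a ∈ ℚ` be a
nonsquare. Then for every `n ≥ 1`, `√a ∈ K(ζ_n)` iff `√a ∈ ℚ(ζ_n)` or `√(a/Δ) ∈ ℚ(ζ_n)`. -/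
theorem rat_sqrt_mem_quadratic_cyclotomic_iff
    (Δ : ℤ) (hΔns : ¬ IsSquare Δ)
    (hΔfund : (Δ % 4 = 1 ∧ Squarefree Δ) ∨
      ∃ d : ℤ, Δ = 4 * d ∧ Squarefree d ∧ (d % 4 = 2 ∨ d % 4 = 3))
    (sΔ : ℂ) (hsΔ : sΔ ^ 2 = (Δ : ℂ))
    (a : ℚ) (ha : ¬ IsSquare a)
    (sa sb : ℂ) (hsa : sa ^ 2 = (a : ℂ)) (hsb : sb ^ 2 = ((a / (Δ : ℚ) : ℚ) : ℂ)) :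
    ∀ n : ℕ, 0 < n → ∀ ζ : ℂ, IsPrimitiveRoot ζ n →
      (sa ∈ IntermediateField.adjoin ℚ {sΔ, ζ} ↔
        sa ∈ IntermediateField.adjoin ℚ {ζ} ∨ sb ∈ IntermediateField.adjoin ℚ {ζ}) := by
  intro n hn ζ hζ
  set L : IntermediateField ℚ ℂ := IntermediateField.adjoin ℚ {ζ} with hL
  have hΔne : Δ ≠ 0 := by rintro rfl; exact hΔns ⟨0, by ring⟩
  have hΔC : ((Δ : ℤ) : ℂ) ≠ 0 := by exact_mod_cast hΔne
  have haC : (a : ℂ) ∈ L := by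
    have := L.algebraMap_mem a
    rwa [show algebraMap ℚ ℂ a = (a : ℂ) from eq_ratCast (algebraMap ℚ ℂ) a] at this
  have hΔL : ((Δ : ℤ) : ℂ) ∈ L := intCast_mem L Δ
  have hM : IntermediateField.adjoin ℚ {sΔ, ζ} =
      (IntermediateField.adjoin (↥L) {sΔ}).restrictScalars ℚ := by
    erw [IntermediateField.adjoin_adjoin_left (F := ℚ) (S := {ζ})]
    congr 1
    rw [Set.union_comm, Set.singleton_union]
  have hsbsq : sb ^ 2 * ((Δ : ℤ) : ℂ) = (a : ℂ) := by
    rw [hsb]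
    push_cast
    field_simp
  constructor
  · intro hmem
    by_cases hsL : sΔ ∈ L
    · left
      have hle : IntermediateField.adjoin ℚ {sΔ, ζ} ≤ L := by
        apply IntermediateField.adjoin_le_iff.mpr
        rw [Set.insert_subset_iff, Set.singleton_subset_iff]
        exact ⟨hsL, IntermediateField.subset_adjoin ℚ {ζ} rfl⟩
      exact hle hmem
    · rw [hM, IntermediateField.mem_restrictScalars] at hmem
      obtain ⟨u, v, huv⟩ := quad_rep sΔ (⟨((Δ : ℤ) : ℂ), hΔL⟩ : L) (by rw [hsΔ]; rfl) hmem
      have huv' : sa = (u : ℂ) + (v : ℂ) * sΔ := huv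
      have key : (u : ℂ) * (v : ℂ) = 0 := by
        by_contra hne
        apply hsL
        have h2 : (2 : ℂ) * u * v ≠ 0 := by
          rw [mul_assoc]
          exact mul_ne_zero two_ne_zero hne
        have hform : sΔ = ((a : ℂ) - (u : ℂ) ^ 2 - (v : ℂ) ^ 2 * ((Δ : ℤ) : ℂ)) /
            (2 * (u : ℂ) * (v : ℂ)) := by
          rw [eq_div_iff h2]
          linear_combination hsa - (sa + (u : ℂ) + (v : ℂ) * sΔ) * huv' -
            (v : ℂ) ^ 2 * hsΔ
        rw [hform]
        exact div_mem (sub_mem (sub_mem haC (pow_mem u.2 2)) (mul_mem (pow_mem v.2 2) hΔL))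
          (mul_mem (mul_mem (L.natCast_mem 2) u.2) v.2)
      rcases mul_eq_zero.mp key with hu | hv
      · right
        have h' : sa = (v : ℂ) * sΔ := by rw [huv', hu]; ring
        have hv2 : sb ^ 2 = (v : ℂ) ^ 2 := by
          have hva : (v : ℂ) ^ 2 * ((Δ : ℤ) : ℂ) = (a : ℂ) := by
            linear_combination hsa - (sa + (v : ℂ) * sΔ) * h' - (v : ℂ) ^ 2 * hsΔ
          have := hsbsq
          rw [← hva] at this
          exact mul_right_cancel₀ hΔC this
        rcases sq_eq_sq_iff_eq_or_eq_neg.mp hv2 with h | h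
        · rw [h]; exact v.2
        · rw [h]; exact neg_mem v.2
      · left
        have : sa = (u : ℂ) := by rw [huv', hv]; ring
        rw [this]; exact u.2
  · rintro (h | h)
    · exact IntermediateField.adjoin.mono ℚ _ _ (by simp [Set.subset_def]) h
    · have hΔmem : sΔ ∈ IntermediateField.adjoin ℚ {sΔ, ζ} :=
        IntermediateField.subset_adjoin ℚ _ (Or.inl rfl)
      have hbmem : sb ∈ IntermediateField.adjoin ℚ {sΔ, ζ} :=
        IntermediateField.adjoin.mono ℚ _ _ (by simp [Set.subset_def]) h
      have hsq : sa ^ 2 = (sb * sΔ) ^ 2 := by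
        rw [hsa, mul_pow, hsΔ, hsbsq]
      rcases sq_eq_sq_iff_eq_or_eq_neg.mp hsq with h' | h'
      · rw [h']; exact mul_mem hbmem hΔmem
      · rw [h']; exact neg_mem (mul_mem hbmem hΔmem)
end

section
/- Let K be a quadratic field containing exactly two roots of unity, γ ∈ K with |Norm_{K/ℚ}(γ)| = 1, and n an odd positive integer. Then γ ∈ K(ζ_n)ⁿ (i.e., γ is an n-th power of an element of K(ζ_n)) if and only if γ = δⁿ for some δ ∈ K. -/
lemma fixed_point_mem {F L : Type*} [Field F] [Field L] [Algebra F L] [FiniteDimensional F L]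
    [IsGalois F L] {x : L} (h : ∀ σ : L ≃ₐ[F] L, σ x = x) : ∃ y : F, algebraMap F L y = x := by
  have h2 : IntermediateField.fixedField (⊤ : Subgroup (L ≃ₐ[F] L)) = ⊥ := by
    rw [← IntermediateField.fixingSubgroup_bot, IsGalois.fixedField_fixingSubgroup]
  have hx : x ∈ IntermediateField.fixedField (⊤ : Subgroup (L ≃ₐ[F] L)) := fun g => h g
  rw [h2] at hx
  rwa [IntermediateField.mem_bot] at hx

lemma core_descent {F L : Type*} [Field F] [Field L] [Algebra F L] [FiniteDimensional F L]
    [IsGalois F L] (hcomm : ∀ σ τ : L ≃ₐ[F] L, σ * τ = τ * σ)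
    {p : ℕ} (hp : p.Prime) {ζp ε : L} (hζp : IsPrimitiveRoot ζp p) {γ : F}
    (hε : ε ^ p = algebraMap F L γ) :
    (∃ δ : F, δ ^ p = γ) ∨ ∃ z : F, algebraMap F L z = ζp := by
  haveI : Fact p.Prime := ⟨hp⟩
  haveI : NeZero p := ⟨hp.ne_zero⟩
  have hinj : ∀ x y : ZMod p, ζp ^ x.val = ζp ^ y.val → x = y := by
    intro x y hxy
    have := hζp.pow_inj (ZMod.val_lt x) (ZMod.val_lt y) hxy
    exact ZMod.val_injective p this
  have hpowadd : ∀ x y : ZMod p, ζp ^ (x + y).val = ζp ^ x.val * ζp ^ y.val := by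
    intro x y
    rw [← pow_add, ZMod.val_add, ← pow_eq_pow_mod _ hζp.pow_eq_one]
  have hpowmul : ∀ x y : ZMod p, (ζp ^ x.val) ^ y.val = ζp ^ (x * y).val := by
    intro x y
    rw [← pow_mul, ZMod.val_mul, ← pow_eq_pow_mod _ hζp.pow_eq_one]
  -- J σ : exponent of σ on ε
  have hJ : ∀ σ : L ≃ₐ[F] L, ∃ j : ZMod p, σ ε = ζp ^ j.val * ε := by
    intro σ
    rcases eq_or_ne ε 0 with rfl | hε0
    · exact ⟨0, by simp⟩
    · have h1 : (σ ε / ε) ^ p = 1 := by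
        rw [div_pow, hε, ← map_pow, hε, AlgEquiv.commutes, div_self]
        simp only [ne_eq, map_eq_zero]
        intro hc
        rw [hc, map_zero] at hε
        exact hε0 (pow_eq_zero_iff hp.ne_zero |>.mp hε)
      obtain ⟨i, hi, hfi⟩ := hζp.eq_pow_of_pow_eq_one h1
      refine ⟨(i : ZMod p), ?_⟩
      rw [ZMod.val_cast_of_lt hi, hfi, div_mul_cancel₀ _ hε0]
  have hR : ∀ σ : L ≃ₐ[F] L, ∃ r : ZMod p, σ ζp = ζp ^ r.val ∧ r ≠ 0 := by
    intro σ
    have h1 : (σ ζp) ^ p = 1 := by rw [← map_pow, hζp.pow_eq_one, map_one]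
    obtain ⟨i, hi, hfi⟩ := hζp.eq_pow_of_pow_eq_one h1
    refine ⟨(i : ZMod p), by rw [ZMod.val_cast_of_lt hi, hfi], ?_⟩
    intro hc
    have hi0 : i = 0 := by
      have := ZMod.val_cast_of_lt hi
      rw [hc, ZMod.val_zero] at this
      omega
    rw [hi0, pow_zero] at hfi
    have : ζp = 1 := by
      have := congrArg σ.symm hfi.symm
      simpa using this
    exact hζp.ne_one hp.one_lt this
  choose J hJ using hJ
  choose R hR hR0 using hR
  by_cases hfix : ∀ σ : L ≃ₐ[F] L, σ ε = ε
  · obtain ⟨δ, hδ⟩ := fixed_point_mem hfix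
    left
    refine ⟨δ, (algebraMap F L).injective ?_⟩
    rw [map_pow, hδ, hε]
  · push_neg at hfix
    obtain ⟨τ0, hτ0⟩ := hfix
    have hε0 : ε ≠ 0 := by
      intro hc
      apply hτ0
      rw [hc, map_zero]
    -- the commutation identity
    have key : ∀ σ τ : L ≃ₐ[F] L, R σ * J τ + J σ = R τ * J σ + J τ := by
      intro σ τ
      have h1 : σ (τ ε) = τ (σ ε) := by
        have := congrArg (fun f : L ≃ₐ[F] L => f ε) (hcomm σ τ)
        simpa using this
      have h2 : σ (τ ε) = ζp ^ (R σ * J τ + J σ).val * ε := by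
        rw [hJ τ, map_mul, map_pow, hR σ, hJ σ, hpowmul, hpowadd]
        ring
      have h3 : τ (σ ε) = ζp ^ (R τ * J σ + J τ).val * ε := by
        rw [hJ σ, map_mul, map_pow, hR τ, hJ τ, hpowmul, hpowadd]
        ring
      apply hinj
      have := h2.symm.trans (h1.trans h3)
      exact mul_right_cancel₀ hε0 this
    have hJτ0 : J τ0 ≠ 0 := by
      intro hc
      apply hτ0
      rw [hJ τ0, hc, ZMod.val_zero, pow_zero, one_mul]
    by_cases hr1 : R τ0 = 1
    · right
      have hall : ∀ σ : L ≃ₐ[F] L, σ ζp = ζp := by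
        intro σ
        have h1 := key σ τ0
        rw [hr1, one_mul] at h1
        have h2 : R σ * J τ0 = J τ0 := by linear_combination h1
        have h3 : R σ = 1 := by
          have h4 : R σ * J τ0 = 1 * J τ0 := by rw [h2, one_mul]
          exact mul_right_cancel₀ hJτ0 h4
        rw [hR σ, h3, ZMod.val_one, pow_one]
      exact fixed_point_mem hall
    · left
      set x0 : ZMod p := J τ0 * (1 - R τ0)⁻¹ with hx0
      have hsub : (1 - R τ0) ≠ 0 := by
        intro hc
        apply hr1
        linear_combination -hc
      have hfixed : ∀ σ : L ≃ₐ[F] L, R σ * x0 + J σ = x0 := by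
        intro σ
        have h1 := key σ τ0
        have h2 : J σ * (1 - R τ0) = J τ0 * (1 - R σ) := by ring_nf; linear_combination h1
        rw [hx0]; field_simp
        ring_nf
        ring_nf at h2
        linear_combination (1 : ZMod p) * h2
      have hfix2 : ∀ σ : L ≃ₐ[F] L, σ (ζp ^ x0.val * ε) = ζp ^ x0.val * ε := by
        intro σ
        have h5 : ζp ^ (R σ * x0).val * (ζp ^ (J σ).val * ε) = ζp ^ x0.val * ε := by
          rw [← mul_assoc, ← hpowadd, hfixed σ]
        calc σ (ζp ^ x0.val * ε) = (σ ζp) ^ x0.val * σ ε := by rw [map_mul, map_pow]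
          _ = ζp ^ (R σ * x0).val * (ζp ^ (J σ).val * ε) := by rw [hR σ, hJ σ, hpowmul]
          _ = ζp ^ x0.val * ε := h5
      obtain ⟨δ, hδ⟩ := fixed_point_mem hfix2
      refine ⟨δ, (algebraMap F L).injective ?_⟩
      rw [map_pow, hδ, mul_pow, ← pow_mul, mul_comm x0.val p, pow_mul, hζp.pow_eq_one,
        one_pow, one_mul, hε]

lemma descend_nth_power {F L : Type*} [Field F] [Field L] [Algebra F L] [FiniteDimensional F L]
    [IsGalois F L] (hcomm : ∀ σ τ : L ≃ₐ[F] L, σ * τ = τ * σ)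
    {N : ℕ} (hN : 0 < N) {ζ : L} (hζ : IsPrimitiveRoot ζ N) :
    ∀ n : ℕ, 0 < n → n ∣ N →
      (∀ p : ℕ, p.Prime → p ∣ n → ∀ z : F, (algebraMap F L z) ^ p = 1 → algebraMap F L z = 1) →
      ∀ (γ : F) (ε : L), ε ^ n = algebraMap F L γ → ∃ δ : F, δ ^ n = γ := by
  intro n
  induction n using Nat.strong_induction_on with
  | _ n IH =>
    intro hn hnN hroots γ ε hε
    rcases eq_or_ne n 1 with rfl | hn1
    · exact ⟨γ, pow_one γ⟩
    have hp : n.minFac.Prime := Nat.minFac_prime hn1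
    set p := n.minFac with hpdef
    have hpdvd : p ∣ n := Nat.minFac_dvd n
    obtain ⟨m, hm⟩ : ∃ m, n = p * m := hpdvd
    have hm0 : 0 < m := by
      rcases Nat.eq_zero_or_pos m with rfl | h
      · omega
      · exact h
    have hmn : m < n := by
      have := hp.one_lt
      calc m < p * m := by nlinarith
        _ = n := hm.symm
    obtain ⟨s, hs⟩ : ∃ s, N = n * s := hnN
    have hs0 : 0 < s := by
      rcases Nat.eq_zero_or_pos s with rfl | h
      · omega
      · exact h
    -- primitive p-th root
    have hζp : IsPrimitiveRoot (ζ ^ (m * s)) p := by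
      refine hζ.pow hN ?_
      rw [hs, hm]; ring
    -- apply core_descent to ε ^ m
    have hεm : (ε ^ m) ^ p = algebraMap F L γ := by
      rw [← pow_mul, mul_comm m p, ← hm, hε]
    rcases core_descent hcomm hp hζp hεm with ⟨δ0, hδ0⟩ | ⟨z, hz⟩
    · -- now descend δ0 through m
      rcases eq_or_ne γ 0 with rfl | hγ0
      · exact ⟨0, by rw [zero_pow hn.ne']⟩
      have hδ00 : δ0 ≠ 0 := by
        intro hc; rw [hc, zero_pow hp.ne_zero] at hδ0; exact hγ0 hδ0.symm
      have hD0 : algebraMap F L δ0 ≠ 0 := by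
        simpa using hδ00
      have hωp : (ε ^ m / algebraMap F L δ0) ^ p = 1 := by
        rw [div_pow, hεm, ← map_pow, hδ0, div_self]
        simpa using hγ0
      haveI : NeZero p := ⟨hp.ne_zero⟩
      obtain ⟨i, hi, hfi⟩ := hζp.eq_pow_of_pow_eq_one hωp
      have hζ0 : ζ ≠ 0 := by
        intro hc
        have := hζ.pow_eq_one
        rw [hc, zero_pow hN.ne'] at this
        exact zero_ne_one this
      have hε1 : (ε / ζ ^ (s * i)) ^ m = algebraMap F L δ0 := by
        have h2 : (ζ ^ (m * s)) ^ i = (ζ ^ (s * i)) ^ m := by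
          rw [← pow_mul, ← pow_mul]; ring_nf
        have hεne : ε ≠ 0 := by
          intro hc
          rw [hc, zero_pow hn.ne'] at hε
          exact hγ0 (by simpa using hε.symm)
        rw [div_pow, ← h2, hfi, div_div_eq_mul_div, mul_comm, mul_div_assoc,
          div_self (pow_ne_zero m hεne), mul_one]
      have hmn' : m ∣ n := ⟨p, by rw [hm, mul_comm]⟩
      have hmdvd : m ∣ N := dvd_trans hmn' ⟨s, hs⟩
      obtain ⟨δ1, hδ1⟩ := IH m hmn hm0 hmdvd
        (fun q hq hqm z hzp => hroots q hq (hqm.trans hmn') z hzp) δ0 _ hε1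
      refine ⟨δ1, ?_⟩
      rw [hm, mul_comm p m, pow_mul, hδ1, hδ0]
    · exfalso
      have h1 : (algebraMap F L z) ^ p = 1 := by rw [hz]; exact hζp.pow_eq_one
      have h2 := hroots p hp (Nat.minFac_dvd n) z h1
      rw [hz] at h2
      exact hζp.ne_one hp.one_lt h2

lemma int_sq_neg_three {Δ v : ℤ} (hsf : Squarefree Δ) (h : v ^ 2 = -3 * Δ) : Δ = -3 := by
  have h3 : (3:ℤ) ∣ v := by
    have hd : (3:ℤ) ∣ v^2 := ⟨-Δ, by linarith⟩
    have := Int.Prime.dvd_pow' (p := 3) (by norm_num) (by exact_mod_cast hd)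
    exact_mod_cast this
  obtain ⟨u, hu⟩ := h3
  have h9 : 9 * u^2 = -3 * Δ := by
    rw [hu] at h; ring_nf at h ⊢; linarith
  have hΔu : Δ = -3 * u^2 := by linarith
  have hunit : IsUnit u := hsf u ⟨-3, by rw [hΔu]; ring⟩
  rcases Int.isUnit_iff.mp hunit with h1 | h1 <;> rw [hΔu, h1] <;> ring

set_option maxHeartbeats 1600000 in
set_option synthInstance.maxHeartbeats 400000 in
/-- Let `K = ℚ(√Δ)` be a quadratic field with fundamental discriminant `Δ ∉ {-3, -4}` (so `K`
contains exactly two roots of unity), let `γ = a + b√Δ ∈ K` with `|Norm(γ)| = 1`, and let `n`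
be an odd positive integer. Then `γ ∈ K(ζ_n)ⁿ` iff `γ = δⁿ` for some `δ ∈ K`. -/
theorem mem_nth_powers_iff_odd
    (Δ : ℤ) (hΔns : ¬ IsSquare Δ) (hΔ3 : Δ ≠ -3) (hΔ4 : Δ ≠ -4)
    (hΔfund : (Δ % 4 = 1 ∧ Squarefree Δ) ∨
      ∃ d : ℤ, Δ = 4 * d ∧ Squarefree d ∧ (d % 4 = 2 ∨ d % 4 = 3))
    (sΔ : ℂ) (hsΔ : sΔ ^ 2 = (Δ : ℂ))
    (a b : ℚ) (γ : ℂ) (hγ : γ = (a : ℂ) + (b : ℂ) * sΔ)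
    (hNorm : |a ^ 2 - b ^ 2 * (Δ : ℚ)| = 1)
    (n : ℕ) (hn : 0 < n) (hodd : Odd n)
    (ζ : ℂ) (hζ : IsPrimitiveRoot ζ n) :
    (∃ ε ∈ IntermediateField.adjoin ℚ {sΔ, ζ}, ε ^ n = γ) ↔
      ∃ δ ∈ IntermediateField.adjoin ℚ {sΔ}, δ ^ n = γ := by
  classical
  constructor
  swap
  · rintro ⟨δ, hδmem, hδn⟩
    exact ⟨δ, IntermediateField.adjoin.mono ℚ _ _
      (Set.singleton_subset_iff.mpr (Set.mem_insert _ _)) hδmem, hδn⟩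
  rintro ⟨ε, hεmem, hεn⟩
  set K : IntermediateField ℚ ℂ := IntermediateField.adjoin ℚ {sΔ} with hKdef
  have hsΔK : sΔ ∈ K := IntermediateField.subset_adjoin _ _ rfl
  have hratint : ∀ (q : ℚ) (m : ℤ), q ^ 2 = (m : ℚ) → ∃ w : ℤ, (w : ℚ) = q := by
    intro q m h
    have hint : IsIntegral ℤ q := by
      refine ⟨Polynomial.X ^ 2 - Polynomial.C m, Polynomial.monic_X_pow_sub_C m two_ne_zero, ?_⟩
      rw [Polynomial.eval₂_sub, Polynomial.eval₂_pow, Polynomial.eval₂_X, Polynomial.eval₂_C,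
        eq_intCast, h, sub_self]
    exact IsIntegrallyClosed.isIntegral_iff.mp hint
  have hnotsq : ∀ q : ℚ, q ^ 2 ≠ (Δ : ℚ) := by
    intro q hq
    obtain ⟨w, hw⟩ := hratint q Δ hq
    apply hΔns
    have h1 : (w:ℚ)^2 = (Δ:ℚ) := by rw [hw]; exact hq
    have h2 : w^2 = Δ := by exact_mod_cast h1
    exact ⟨w, by rw [← h2]; ring⟩
  have haevalΔ : Polynomial.aeval sΔ (Polynomial.X ^ 2 - Polynomial.C ((Δ:ℚ))) = 0 := by
    rw [map_sub, map_pow, Polynomial.aeval_X, Polynomial.aeval_C, hsΔ, eq_ratCast]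
    push_cast
    ring
  have hsΔint : IsIntegral ℚ sΔ := by
    refine ⟨Polynomial.X ^ 2 - Polynomial.C ((Δ : ℚ)),
      Polynomial.monic_X_pow_sub_C _ two_ne_zero, ?_⟩
    exact haevalΔ
  have hminsΔ : minpoly ℚ sΔ = Polynomial.X ^ 2 - Polynomial.C ((Δ:ℚ)) := by
    refine (minpoly.eq_of_irreducible_of_monic ?_ ?_ ?_).symm
    · exact X_pow_sub_C_irreducible_of_prime Nat.prime_two (fun b hb => hnotsq b hb)
    · exact haevalΔ
    · exact Polynomial.monic_X_pow_sub_C _ two_ne_zero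
  haveI hKfd : FiniteDimensional ℚ ↥K := IntermediateField.adjoin.finiteDimensional hsΔint
  have hKrank : Module.finrank ℚ ↥K = 2 := by
    rw [hKdef, IntermediateField.adjoin.finrank hsΔint, hminsΔ,
      Polynomial.natDegree_X_pow_sub_C]
  have hdecomp : ∀ v : ℂ, v ∈ K → ∃ x y : ℚ, v = (x:ℂ) + (y:ℂ) * sΔ := by
    intro v hv
    have hv' : v ∈ Algebra.adjoin ℚ ({sΔ} : Set ℂ) := by
      rw [← IntermediateField.adjoin_simple_toSubalgebra_of_isAlgebraic hsΔint.isAlgebraic]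
      exact hv
    rw [Algebra.adjoin_singleton_eq_range_aeval] at hv'
    obtain ⟨f, hf⟩ := hv'
    have hf2 : Polynomial.aeval sΔ f = v := hf
    have hmonic := Polynomial.monic_X_pow_sub_C ((Δ:ℚ)) two_ne_zero
    have hmod := Polynomial.modByMonic_add_div f (Polynomial.X ^ 2 - Polynomial.C ((Δ:ℚ)))
    set r := f %ₘ (Polynomial.X ^ 2 - Polynomial.C ((Δ:ℚ))) with hrdef
    have hdeg2 : r.degree < 2 := by
      have := Polynomial.degree_modByMonic_lt f hmonic
      rwa [Polynomial.degree_X_pow_sub_C (by norm_num)] at this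
    have hdeg : r.degree ≤ 1 := by
      rcases hd : r.degree with _ | k
      · exact bot_le
      · rw [hd] at hdeg2
        have h2 : (k : WithBot ℕ) < 2 := hdeg2
        have h3 : k < 2 := by exact_mod_cast h2
        have h4 : k ≤ 1 := by omega
        show (k : WithBot ℕ) ≤ 1
        exact_mod_cast h4
    have hr : v = Polynomial.aeval sΔ r := by
      rw [← hf2]
      conv_lhs => rw [← hmod]
      rw [map_add, map_mul, haevalΔ, zero_mul, add_zero]
    refine ⟨r.coeff 0, r.coeff 1, ?_⟩
    have heq := Polynomial.eq_X_add_C_of_degree_le_one hdeg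
    rw [hr]
    conv_lhs => rw [heq]
    simp only [map_add, map_mul, Polynomial.aeval_X, Polynomial.aeval_C]
    rw [eq_ratCast (algebraMap ℚ ℂ), eq_ratCast (algebraMap ℚ ℂ)]
    ring
  have hKroots : ∀ p : ℕ, p.Prime → p ∣ n → ∀ w : ℂ, w ∈ K → w ^ p = 1 → w = 1 := by
    intro p hp hpn w hwK hwp
    by_contra hw1
    have hpodd : p ≠ 2 := by
      rintro rfl
      obtain ⟨k, hk⟩ := hodd
      obtain ⟨c, hc⟩ := hpn
      omega
    have hord : orderOf w = p := by
      have hdvd : orderOf w ∣ p := orderOf_dvd_of_pow_eq_one hwp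
      rcases hp.eq_one_or_self_of_dvd _ hdvd with h | h
      · exact absurd (orderOf_eq_one_iff.mp h) hw1
      · exact h
    have hwprim : IsPrimitiveRoot w p := hord ▸ IsPrimitiveRoot.orderOf w
    have hwint : IsIntegral ℚ w := by
      refine ⟨Polynomial.X ^ p - Polynomial.C 1,
        Polynomial.monic_X_pow_sub_C _ hp.ne_zero, ?_⟩
      simp [hwp]
    have hQw : IntermediateField.adjoin ℚ {w} ≤ K := by
      rw [IntermediateField.adjoin_le_iff]
      simpa using hwK
    haveI : FiniteDimensional ℚ ↥(IntermediateField.adjoin ℚ {w}) :=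
      IntermediateField.adjoin.finiteDimensional hwint
    have hrankw : Module.finrank ℚ ↥(IntermediateField.adjoin ℚ {w}) = p - 1 := by
      rw [IntermediateField.adjoin.finrank hwint, ← Polynomial.cyclotomic_eq_minpoly_rat hwprim hp.pos,
        Polynomial.natDegree_cyclotomic, Nat.totient_prime hp]
    have hle : p - 1 ≤ 2 := by
      rw [← hrankw, ← hKrank]
      exact LinearMap.finrank_le_finrank_of_injective
        (f := (IntermediateField.inclusion hQw).toLinearMap)
        ((IntermediateField.inclusion hQw).toRingHom.injective)
    have hp3 : p = 3 := by
      have := hp.two_le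
      omega
    subst hp3
    have hq : w ^ 2 + w + 1 = 0 := by
      have h0 : (w - 1) * (w ^ 2 + w + 1) = 0 := by linear_combination hwp
      rcases mul_eq_zero.mp h0 with h | h
      · exact absurd (by linear_combination h) hw1
      · exact h
    have huK : (2 * w + 1 : ℂ) ∈ K := by
      refine add_mem (mul_mem ?_ hwK) (one_mem K)
      exact_mod_cast K.intCast_mem 2
    obtain ⟨x, y, hxy⟩ := hdecomp _ huK
    have husq' : ((x:ℂ) + (y:ℂ) * sΔ)^2 = -3 := by
      rw [← hxy]; linear_combination 4 * hq
    have hkey : ((2*x*y : ℚ) : ℂ) * sΔ = ((-3 - x^2 - y^2*Δ : ℚ) : ℂ) := by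
      push_cast
      linear_combination husq' - (y:ℂ)^2 * hsΔ
    by_cases hxy0 : (2*x*y : ℚ) = 0
    · have hxory : x = 0 ∨ y = 0 := by
        rcases mul_eq_zero.mp hxy0 with h | h
        · left
          rcases mul_eq_zero.mp h with h' | h'
          · norm_num at h'
          · exact h'
        · right; exact h
      rcases hxory with hx0 | hy0
      · -- x = 0 : y² Δ = −3 in ℚ
        have h1 : ((y^2*Δ : ℚ) : ℂ) = ((-3 : ℚ) : ℂ) := by
          push_cast
          subst hx0
          push_cast at husq'
          linear_combination husq' - (y:ℂ)^2 * hsΔ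
        have h2 : (y^2 * Δ : ℚ) = -3 := by exact_mod_cast h1
        have h3 : (y*Δ : ℚ)^2 = ((-3*Δ : ℤ) : ℚ) := by push_cast; linear_combination (Δ:ℚ) * h2
        obtain ⟨v, hv⟩ := hratint _ _ h3
        have h4 : (v:ℚ)^2 = ((-3*Δ : ℤ) : ℚ) := by rw [hv]; exact h3
        have h5 : v^2 = -3*Δ := by exact_mod_cast h4
        rcases hΔfund with ⟨h41, hsf⟩ | ⟨d, hd4, hsfd, hdm⟩
        · exact hΔ3 (int_sq_neg_three hsf h5)
        · have hveven : (2:ℤ) ∣ v := by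
            have hd : (2:ℤ) ∣ v^2 := ⟨-6*d, by rw [h5, hd4]; ring⟩
            have h2 := Int.Prime.dvd_pow' (p := 2) (by norm_num) (show ((2:ℕ):ℤ) ∣ v^2 by exact_mod_cast hd)
            exact_mod_cast h2
          obtain ⟨v0, hv0⟩ := hveven
          have h6 : v0^2 = -3*d := by
            have : (2*v0)^2 = -3*(4*d) := by rw [← hv0, ← hd4]; exact h5
            nlinarith [this]
          have hd3 : d = -3 := int_sq_neg_three hsfd h6
          rw [hd3] at hdm
          omega
      · -- y = 0 : x² = −3 in ℚ
        have h1 : ((x:ℚ)^2 : ℚ) = -3 := by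
          have : ((x:ℂ))^2 = -3 := by
            subst hy0; push_cast at husq'; linear_combination husq'
          exact_mod_cast this
        nlinarith [sq_nonneg x, h1]
    · -- sΔ would be rational
      have h9 : (((2*x*y:ℚ):ℂ) * sΔ)^2 = (((-3 - x^2 - y^2*Δ : ℚ)):ℂ)^2 := by rw [hkey]
      have hsq' : (2*x*y : ℚ)^2 * (Δ:ℚ) = ((-3 - x^2 - y^2*Δ) : ℚ)^2 := by
        have h10 : (((2*x*y:ℚ):ℂ))^2 * ((Δ:ℚ):ℂ) = (((-3 - x^2 - y^2*Δ : ℚ)):ℂ)^2 := by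
          push_cast at h9 ⊢
          linear_combination h9 - (2*(x:ℂ)*(y:ℂ))^2 * hsΔ
        exact_mod_cast h10
      refine hnotsq ((-3 - x^2 - y^2*Δ)/(2*x*y)) ?_
      rw [div_pow, div_eq_iff (pow_ne_zero 2 hxy0)]
      linarith [hsq']
  -- Tower setup
  set LK : IntermediateField ↥K ℂ := IntermediateField.adjoin ↥K {ζ} with hLK
  have hζint : IsIntegral ↥K ζ := by
    refine ⟨Polynomial.X ^ n - Polynomial.C 1, Polynomial.monic_X_pow_sub_C _ hn.ne', ?_⟩
    simp [hζ.pow_eq_one]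
  haveI : FiniteDimensional ↥K ↥LK := IntermediateField.adjoin.finiteDimensional hζint
  have hmemLK : ∀ x : ℂ, x ∈ IntermediateField.adjoin ℚ {sΔ, ζ} ↔ x ∈ LK := by
    intro x
    have h1 := IntermediateField.adjoin_adjoin_left ℚ {sΔ} ({ζ} : Set ℂ)
    rw [Set.singleton_union] at h1
    constructor
    · intro hx
      rw [← h1] at hx
      exact hx
    · intro hx
      rw [← h1]
      exact hx
  set np : ℕ+ := ⟨n, hn⟩ with hnp
  have hζnp : IsPrimitiveRoot ζ ((np : ℕ+) : ℕ) := hζ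
  have htsub : LK.toSubalgebra = Algebra.adjoin ↥K ({ζ} : Set ℂ) :=
    IntermediateField.adjoin_simple_toSubalgebra_of_isAlgebraic hζint.isAlgebraic
  haveI : NeZero n := ⟨hn.ne'⟩
  haveI hcycA : IsCyclotomicExtension {n} ↥K ↥(Algebra.adjoin ↥K ({ζ} : Set ℂ)) :=
    hζnp.adjoin_isCyclotomicExtension ↥K
  haveI hcyc : IsCyclotomicExtension {n} ↥K ↥LK :=
    IsCyclotomicExtension.equiv _ _ _ (Subalgebra.equivOfEq _ _ htsub.symm)
  haveI hgal : IsGalois ↥K ↥LK := IsCyclotomicExtension.isGalois {n} ↥K ↥LK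
  have hcomm : ∀ σ τ : ↥LK ≃ₐ[↥K] ↥LK, σ * τ = τ * σ := by
    have hmc := IsCyclotomicExtension.isMulCommutative {n} ↥K ↥LK
    intro σ τ
    exact hmc.is_comm.comm σ τ
  have hζLK : ζ ∈ LK := IntermediateField.subset_adjoin _ _ rfl
  set ζL : ↥LK := ⟨ζ, hζLK⟩ with hζL
  have hζLprim : IsPrimitiveRoot ζL n := IsPrimitiveRoot.coe_submonoidClass_iff.mp hζ
  have hγK : γ ∈ K := by
    rw [hγ]
    refine add_mem ?_ (mul_mem ?_ hsΔK)
    · have := K.algebraMap_mem a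
      rwa [eq_ratCast (algebraMap ℚ ℂ) a] at this
    · have := K.algebraMap_mem b
      rwa [eq_ratCast (algebraMap ℚ ℂ) b] at this
  set γK : ↥K := ⟨γ, hγK⟩ with hγKdef
  have hεLK : ε ∈ LK := (hmemLK ε).mp hεmem
  set εL : ↥LK := ⟨ε, hεLK⟩ with hεL
  have hεLn : εL ^ n = algebraMap ↥K ↥LK γK := by
    apply Subtype.ext
    push_cast
    rw [hεn]
    rfl
  obtain ⟨δK, hδK⟩ := descend_nth_power hcomm hn hζLprim n hn dvd_rfl
    (by
      intro p hp hpn z hzp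
      have h1 : ((z : ℂ)) ^ p = 1 := by
        have h2 := congrArg (Subtype.val) hzp
        push_cast at h2
        convert h2 using 2
        rfl
      have h2 := hKroots p hp hpn (z:ℂ) z.2 h1
      apply Subtype.ext
      have h3 : ((algebraMap ↥K ↥LK z : ↥LK) : ℂ) = (z : ℂ) := rfl
      rw [h3, h2]
      rfl) γK εL hεLn
  refine ⟨(δK : ℂ), δK.2, ?_⟩
  have := congrArg (Subtype.val) hδK
  push_cast at this
  exact this
end
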